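/- arXiv:2504.02190 — 6 statements merged into one kernel-verified Lean document; each statement's English description precedes it below -/
import Mathlib

section
/- Let P be a subpath of OPT with endpoints p and q such that x(p) > x₀ and x(q) > x₀, and suppose some point of P has x-coordinate less than x₀ (P crosses the vertical line x = x₀). Then the point of P with minimum x-coordinate is a tour vertex of OPT which is a right reflection point. Symmetrically, if both endpoints are to the left of a vertical line which P crosses, the point of P with maximum x-coordinate is a left reflection point. -/
noncomputable section

/-- Euclidean length between two points of the plane `ℝ × ℝ`. -/
def elen (p q : ℝ × ℝ) : ℝ := Real.sqrt ((p.1 - q.1) ^ 2 + (p.2 - q.2) ^ 2)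

/-- The point set of the closed vertical unit segment whose bottom tip is `(s.1, s.2)`. -/
def segPts (s : ℝ × ℝ) : Set (ℝ × ℝ) := {p | p.1 = s.1 ∧ s.2 ≤ p.2 ∧ p.2 ≤ s.2 + 1}

/-- `p` is a tip (endpoint) of the vertical unit segment coded by `s`. -/
def IsTip (s p : ℝ × ℝ) : Prop := p = (s.1, s.2) ∨ p = (s.1, s.2 + 1)

/-- Leg `A` lies above leg `B` (apart from their common point `v`):
every point of `A` other than `v` has strictly larger `y`-coordinate than
every point of `B` other than `v`. -/
def LegAbove (v : ℝ × ℝ) (A B : Set (ℝ × ℝ)) : Prop :=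
  ∀ a ∈ A, ∀ b ∈ B, a ≠ v → b ≠ v → b.2 < a.2

/-- `P₁` is above `P₂` on the set `X` of `x`-coordinates: whenever a vertical line at
`x₀ ∈ X` meets both, every topmost point of `P₁ ∪ P₂` on that line belongs to `P₁`. -/
def AboveOn (P₁ P₂ : Set (ℝ × ℝ)) (X : Set ℝ) : Prop :=
  ∀ x₀ ∈ X, (∃ p ∈ P₁, p.1 = x₀) → (∃ p ∈ P₂, p.1 = x₀) →
    ∀ p, p ∈ P₁ ∪ P₂ → p.1 = x₀ →
      (∀ p', p' ∈ P₁ ∪ P₂ → p'.1 = x₀ → p'.2 ≤ p.2) → p ∈ P₁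

/-- An instance of TSPN over parallel vertical unit segments: a finite set of segments
(coded by their bottom tips) with pairwise distinct `x`-coordinates. -/
structure TSPNInstance where
  segs : Finset (ℝ × ℝ)
  distinct_x : ∀ s ∈ segs, ∀ t ∈ segs, s.1 = t.1 → s = t

/-- A tour: a cyclic sequence of at least three points, each lying on some segment of
the instance. -/
structure Tour (I : TSPNInstance) where
  n : ℕ
  three_le : 3 ≤ n
  pt : Fin n → ℝ × ℝ
  pt_on_seg : ∀ i, ∃ s ∈ I.segs, pt i ∈ segPts s

namespace Tour

variable {I : TSPNInstance}

/-- Cyclic successor index. -/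
def nxt (T : Tour I) (i : Fin T.n) : Fin T.n :=
  ⟨(i.1 + 1) % T.n, Nat.mod_lt _ (by have := T.three_le; omega)⟩

/-- Cyclic predecessor index. -/
def prv (T : Tour I) (i : Fin T.n) : Fin T.n :=
  ⟨(i.1 + (T.n - 1)) % T.n, Nat.mod_lt _ (by have := T.three_le; omega)⟩

/-- The `i`-th leg of the tour: the closed straight segment joining `pt i` to its
cyclic successor. -/
def leg (T : Tour I) (i : Fin T.n) : Set (ℝ × ℝ) := segment ℝ (T.pt i) (T.pt (T.nxt i))

/-- Total Euclidean cost of the tour. -/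
def cost (T : Tour I) : ℝ := ∑ i, elen (T.pt i) (T.pt (T.nxt i))

/-- The tour visits every segment of the instance. -/
def Feasible (T : Tour I) : Prop := ∀ s ∈ I.segs, ∃ i, T.pt i ∈ segPts s

/-- `OPT`: a feasible minimum-cost tour which in addition is non-self-crossing
(no two non-adjacent legs intersect), has no vertical leg, and has no two
consecutive points on the same segment. -/
def IsOPT (T : Tour I) : Prop :=
  T.Feasible ∧
  (∀ T' : Tour I, T'.Feasible → T.cost ≤ T'.cost) ∧
  (∀ i j : Fin T.n, j ≠ i → j ≠ T.nxt i → i ≠ T.nxt j → T.leg i ∩ T.leg j = ∅) ∧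
  (∀ i, (T.pt i).1 ≠ (T.pt (T.nxt i)).1) ∧
  (∀ i, ∀ s ∈ I.segs, T.pt i ∈ segPts s → T.pt (T.nxt i) ∉ segPts s)

/-- `pt i` is a left reflection point: both incident legs go strictly to the left of
the segment containing it. -/
def IsLeftReflection (T : Tour I) (i : Fin T.n) : Prop :=
  ∃ s ∈ I.segs, T.pt i ∈ segPts s ∧
    (T.pt (T.prv i)).1 < s.1 ∧ (T.pt (T.nxt i)).1 < s.1

/-- `pt i` is a right reflection point. -/
def IsRightReflection (T : Tour I) (i : Fin T.n) : Prop :=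
  ∃ s ∈ I.segs, T.pt i ∈ segPts s ∧
    s.1 < (T.pt (T.prv i)).1 ∧ s.1 < (T.pt (T.nxt i)).1

def IsReflection (T : Tour I) (i : Fin T.n) : Prop :=
  T.IsLeftReflection i ∨ T.IsRightReflection i

/-- An ascending reflection point: every point of the outgoing leg (other than the
vertex itself) lies strictly above every point of the incoming leg. -/
def IsAscending (T : Tour I) (i : Fin T.n) : Prop :=
  T.IsReflection i ∧
    ∀ p ∈ T.leg i, ∀ p' ∈ T.leg (T.prv i), p ≠ T.pt i → p' ≠ T.pt i → p'.2 < p.2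

/-- A descending reflection point. -/
def IsDescending (T : Tour I) (i : Fin T.n) : Prop :=
  T.IsReflection i ∧
    ∀ p ∈ T.leg i, ∀ p' ∈ T.leg (T.prv i), p ≠ T.pt i → p' ≠ T.pt i → p.2 < p'.2

/-- A pure reflection point: the two incident legs make equal angles with the
(vertical) containing segment, i.e. the cosines `|Δy|/length` agree. -/
def IsPureReflection (T : Tour I) (i : Fin T.n) : Prop :=
  T.IsReflection i ∧
    |(T.pt (T.prv i)).2 - (T.pt i).2| * elen (T.pt i) (T.pt (T.nxt i)) =
      |(T.pt (T.nxt i)).2 - (T.pt i).2| * elen (T.pt i) (T.pt (T.prv i))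

/-- A straight point: the two incident legs are collinear and lie on opposite sides
of the containing segment. -/
def IsStraight (T : Tour I) (i : Fin T.n) : Prop :=
  ∃ s ∈ I.segs, T.pt i ∈ segPts s ∧
    Collinear ℝ ({T.pt (T.prv i), T.pt i, T.pt (T.nxt i)} : Set (ℝ × ℝ)) ∧
    (((T.pt (T.prv i)).1 < s.1 ∧ s.1 < (T.pt (T.nxt i)).1) ∨
     ((T.pt (T.nxt i)).1 < s.1 ∧ s.1 < (T.pt (T.prv i)).1))

/-- The points of the forward subpath starting at vertex `a` and consisting of `k`
consecutive legs. -/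
def fwdPts (T : Tour I) (a : Fin T.n) (k : ℕ) : Set (ℝ × ℝ) :=
  ⋃ m ∈ Set.Iio k, T.leg ((T.nxt)^[m] a)

/-- The `m`-th vertex of a directed subpath starting at `a`
(forward along the orientation if `d = true`, backward otherwise). -/
def dirIdx (T : Tour I) (d : Bool) (a : Fin T.n) (m : ℕ) : Fin T.n :=
  if d then (T.nxt)^[m] a else (T.prv)^[m] a

/-- The `m`-th leg of a directed subpath starting at `a`. -/
def dirLeg (T : Tour I) (d : Bool) (a : Fin T.n) (m : ℕ) : Set (ℝ × ℝ) :=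
  if d then T.leg ((T.nxt)^[m] a) else T.leg ((T.prv)^[m + 1] a)

/-- The points of the directed subpath starting at `a` with `k` legs. -/
def dirPts (T : Tour I) (d : Bool) (a : Fin T.n) (k : ℕ) : Set (ℝ × ℝ) :=
  ⋃ m ∈ Set.Iio k, T.dirLeg d a m

end Tour

/-- The `y`-coordinate of cover-line `C_τ` (`τ = 0, 1, 2, …`): horizontal lines spaced
1 apart, the first one passing through the bottom tip of the topmost segment. -/
def coverY (I : TSPNInstance) (τ : ℕ) : ℝ :=
  sSup ((fun s : ℝ × ℝ => s.2) '' (↑I.segs : Set (ℝ × ℝ))) - τ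

/-- The strip `S_τ`: the closed region between `C_τ` and `C_{τ+1}`. -/
def strip (I : TSPNInstance) (τ : ℕ) : Set (ℝ × ℝ) :=
  {p | coverY I (τ + 1) ≤ p.2 ∧ p.2 ≤ coverY I τ}

/-- Cover-line `C_τ` meets segment `s`. -/
def MeetsCover (I : TSPNInstance) (s : ℝ × ℝ) (τ : ℕ) : Prop :=
  s.2 ≤ coverY I τ ∧ coverY I τ ≤ s.2 + 1

/-- `s` is covered by `C_τ`: the topmost cover-line meeting it. -/
def CoveredBy (I : TSPNInstance) (s : ℝ × ℝ) (τ : ℕ) : Prop :=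
  MeetsCover I s τ ∧ ∀ τ' < τ, ¬ MeetsCover I s τ'

/-- A top segment of strip `S_τ`: a segment of the instance meeting `C_τ`. -/
def IsTopSeg (I : TSPNInstance) (τ : ℕ) (s : ℝ × ℝ) : Prop :=
  s ∈ I.segs ∧ MeetsCover I s τ

/-- A bottom segment of strip `S_τ`: a segment of the instance covered by `C_{τ+1}`. -/
def IsBotSeg (I : TSPNInstance) (τ : ℕ) (s : ℝ × ℝ) : Prop :=
  s ∈ I.segs ∧ CoveredBy I s (τ + 1)

/-- A polygonal path inside strip `S_τ`, with vertices `q 0, …, q k`. -/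
structure GenPath (I : TSPNInstance) (τ : ℕ) where
  k : ℕ
  q : ℕ → ℝ × ℝ
  in_strip : ∀ m ≤ k, q m ∈ strip I τ

namespace GenPath

variable {I : TSPNInstance} {τ : ℕ}

/-- The points of the path between vertex positions `a` and `b`. -/
def pts (P : GenPath I τ) (a b : ℕ) : Set (ℝ × ℝ) :=
  ⋃ m ∈ Set.Ico a b, segment ℝ (P.q m) (P.q (m + 1))

/-- All points of the path. -/
def allPts (P : GenPath I τ) : Set (ℝ × ℝ) := P.pts 0 P.k

/-- Total Euclidean length of the path. -/
def len (P : GenPath I τ) : ℝ := ∑ m ∈ Finset.range P.k, elen (P.q m) (P.q (m + 1))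

/-- The number of edges of the path in the position range `[a, b)` meeting the vertical
line `x = x₀` (the shadow of that portion at `x₀`). -/
def subShadow (P : GenPath I τ) (a b : ℕ) (x₀ : ℝ) : ℕ :=
  {m : ℕ | a ≤ m ∧ m < b ∧ ∃ p ∈ segment ℝ (P.q m) (P.q (m + 1)), p.1 = x₀}.ncard

/-- The shadow of the whole path at `x₀`. -/
def shadow (P : GenPath I τ) (x₀ : ℝ) : ℕ := P.subShadow 0 P.k x₀

/-- The path meets the vertical line `x = x₀`. -/
def Meets (P : GenPath I τ) (x₀ : ℝ) : Prop := ∃ p ∈ P.allPts, p.1 = x₀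

/-- Intrinsic reflection vertex of a polygonal path: both neighbours lie strictly on
the same side of the vertical line through the vertex. -/
def ReflAt (P : GenPath I τ) (m : ℕ) : Prop :=
  0 < m ∧ m < P.k ∧
    (((P.q (m - 1)).1 < (P.q m).1 ∧ (P.q (m + 1)).1 < (P.q m).1) ∨
     ((P.q m).1 < (P.q (m - 1)).1 ∧ (P.q m).1 < (P.q (m + 1)).1))

/-- Ascending reflection vertex of a polygonal path. -/
def AscAt (P : GenPath I τ) (m : ℕ) : Prop :=
  P.ReflAt m ∧
    ∀ p ∈ segment ℝ (P.q m) (P.q (m + 1)), ∀ p' ∈ segment ℝ (P.q (m - 1)) (P.q m),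
      p ≠ P.q m → p' ≠ P.q m → p'.2 < p.2

/-- Descending reflection vertex of a polygonal path. -/
def DescAt (P : GenPath I τ) (m : ℕ) : Prop :=
  P.ReflAt m ∧
    ∀ p ∈ segment ℝ (P.q m) (P.q (m + 1)), ∀ p' ∈ segment ℝ (P.q (m - 1)) (P.q m),
      p ≠ P.q m → p' ≠ P.q m → p.2 < p'.2

/-- The `m`-th vertex lies on a top segment of the strip. -/
def TopAt (P : GenPath I τ) (m : ℕ) : Prop :=
  ∃ s, IsTopSeg I τ s ∧ P.q m ∈ segPts s

/-- The `m`-th vertex lies on a bottom segment of the strip. -/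
def BotAt (P : GenPath I τ) (m : ℕ) : Prop :=
  ∃ s, IsBotSeg I τ s ∧ P.q m ∈ segPts s

/-- Both endpoints on the same cover-line: a loop. -/
def IsLoopG (P : GenPath I τ) : Prop :=
  ((P.q 0).2 = coverY I τ ∧ (P.q P.k).2 = coverY I τ) ∨
  ((P.q 0).2 = coverY I (τ + 1) ∧ (P.q P.k).2 = coverY I (τ + 1))

/-- Endpoints on different cover-lines: a ladder. -/
def IsLadderG (P : GenPath I τ) : Prop :=
  ((P.q 0).2 = coverY I τ ∧ (P.q P.k).2 = coverY I (τ + 1)) ∨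
  ((P.q 0).2 = coverY I (τ + 1) ∧ (P.q P.k).2 = coverY I τ)

/-- The portion of the path between reflection vertices at positions `a ≤ b` is a sink:
all reflection vertices in between are all ascending or all descending, and they all
lie on top segments or all on bottom segments. -/
def IsSinkSeg (P : GenPath I τ) (a b : ℕ) : Prop :=
  P.ReflAt a ∧ P.ReflAt b ∧ a ≤ b ∧
  ((∀ m, a ≤ m → m ≤ b → P.ReflAt m → P.AscAt m) ∨
   (∀ m, a ≤ m → m ≤ b → P.ReflAt m → P.DescAt m)) ∧
  ((∀ m, a ≤ m → m ≤ b → P.ReflAt m → P.TopAt m) ∨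
   (∀ m, a ≤ m → m ≤ b → P.ReflAt m → P.BotAt m))

/-- The portion of the path between reflection vertices at positions `a < b` is a
zig-zag: all reflection vertices in between are all ascending or all descending, and
the containing segments of consecutive reflection vertices alternate between top and
bottom segments. -/
def IsZigzagSeg (P : GenPath I τ) (a b : ℕ) : Prop :=
  P.ReflAt a ∧ P.ReflAt b ∧ a < b ∧
  ((∀ m, a ≤ m → m ≤ b → P.ReflAt m → P.AscAt m) ∨
   (∀ m, a ≤ m → m ≤ b → P.ReflAt m → P.DescAt m)) ∧
  (∀ m m', a ≤ m → m < m' → m' ≤ b → P.ReflAt m → P.ReflAt m' →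
    (∀ m'', m < m'' → m'' < m' → ¬ P.ReflAt m'') →
    ((P.TopAt m ∧ P.BotAt m') ∨ (P.BotAt m ∧ P.TopAt m')))

end GenPath

/-- The `m`-th vertex of the path is a tip of some input segment. -/
def IsTipVertex (I : TSPNInstance) {τ : ℕ} (P : GenPath I τ) (m : ℕ) : Prop :=
  ∃ s ∈ I.segs, IsTip s (P.q m)

/-- A portion of the tour `T` lying inside strip `S_τ`: every edge is contained in a
leg of `T` and every interior vertex is a tour vertex. -/
structure TourPathInStrip (I : TSPNInstance) (T : Tour I) (τ : ℕ) extends GenPath I τ where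
  edges_sub : ∀ m < k, ∃ i : Fin T.n, segment ℝ (q m) (q (m + 1)) ⊆ T.leg i
  interior_vertex : ∀ m, 0 < m → m < k → ∃ i : Fin T.n, q m = T.pt i

def TourPathInStrip.gp {I : TSPNInstance} {T : Tour I} {τ : ℕ}
    (P : TourPathInStrip I T τ) : GenPath I τ := P.toGenPath

/-- A (maximal) subpath of `OPT_τ`: a tour path in the strip whose two endpoints — its
entry points — lie on the two bounding cover-lines. -/
structure StripPath (I : TSPNInstance) (T : Tour I) (τ : ℕ)
    extends TourPathInStrip I T τ where
  entry0 : (q 0).2 = coverY I τ ∨ (q 0).2 = coverY I (τ + 1)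
  entryk : (q k).2 = coverY I τ ∨ (q k).2 = coverY I (τ + 1)

namespace StripPath

variable {I : TSPNInstance} {T : Tour I} {τ : ℕ}

def gp (P : StripPath I T τ) : GenPath I τ := P.toTourPathInStrip.toGenPath

/-- Position `m` of the path is a reflection point of the tour. -/
def ReflAt (P : StripPath I T τ) (m : ℕ) : Prop :=
  0 < m ∧ m < P.k ∧ ∃ i : Fin T.n, P.q m = T.pt i ∧ T.IsReflection i

/-- Position `m` of the path is an ascending reflection point of the tour. -/
def AscAt (P : StripPath I T τ) (m : ℕ) : Prop :=
  0 < m ∧ m < P.k ∧ ∃ i : Fin T.n, P.q m = T.pt i ∧ T.IsAscending i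

/-- Position `m` of the path is a descending reflection point of the tour. -/
def DescAt (P : StripPath I T τ) (m : ℕ) : Prop :=
  0 < m ∧ m < P.k ∧ ∃ i : Fin T.n, P.q m = T.pt i ∧ T.IsDescending i

def IsLoop (P : StripPath I T τ) : Prop := P.gp.IsLoopG

def IsLadder (P : StripPath I T τ) : Prop := P.gp.IsLadderG

/-- A cover-line loop: the path travels along one of the two cover-lines. -/
def IsCoverLineLoop (P : StripPath I T τ) : Prop :=
  ∃ c : ℝ, (c = coverY I τ ∨ c = coverY I (τ + 1)) ∧ ∀ m ≤ P.k, (P.q m).2 = c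

end StripPath

/-- A sink section of a loop/ladder `P`: the reflection points at positions
`r a, …, r b` are all ascending or all descending, and all lie on top segments or all
on bottom segments. -/
def SinkSegS (I : TSPNInstance) (T : Tour I) (τ : ℕ) (P : StripPath I T τ)
    (r : ℕ → ℕ) (a b : ℕ) : Prop :=
  ((∀ j, a ≤ j → j ≤ b → P.AscAt (r j)) ∨ (∀ j, a ≤ j → j ≤ b → P.DescAt (r j))) ∧
  ((∀ j, a ≤ j → j ≤ b → P.gp.TopAt (r j)) ∨ (∀ j, a ≤ j → j ≤ b → P.gp.BotAt (r j)))

/-- A zig-zag section of a loop/ladder `P`: the reflection points at positions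
`r a, …, r b` are all ascending or all descending, and their containing segments
alternate between top and bottom segments. -/
def ZigzagSegS (I : TSPNInstance) (T : Tour I) (τ : ℕ) (P : StripPath I T τ)
    (r : ℕ → ℕ) (a b : ℕ) : Prop :=
  ((∀ j, a ≤ j → j ≤ b → P.AscAt (r j)) ∨ (∀ j, a ≤ j → j ≤ b → P.DescAt (r j))) ∧
  (∀ j, a ≤ j → j < b →
    ((P.gp.TopAt (r j) ∧ P.gp.BotAt (r (j + 1))) ∨
     (P.gp.BotAt (r j) ∧ P.gp.TopAt (r (j + 1)))))

/-- The block of reflection points `r a, …, r b` spans, in order, a sink, followed by a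
zig-zag, followed by a sink, where any of the three sections may be trivial and the
last reflection of a section is common with the first reflection of the next. -/
def BlockOK (I : TSPNInstance) (T : Tour I) (τ : ℕ) (P : StripPath I T τ)
    (r : ℕ → ℕ) (a b : ℕ) : Prop :=
  ∃ c d, a ≤ c ∧ c ≤ d ∧ d ≤ b ∧
    SinkSegS I T τ P r a c ∧ ZigzagSegS I T τ P r c d ∧ SinkSegS I T τ P r d b

namespace Aux

variable {I : TSPNInstance}

lemma nxt_prv (T : Tour I) (i : Fin T.n) : T.nxt (T.prv i) = i := by
  have hn : 0 < T.n := by have := T.three_le; omega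
  apply Fin.ext
  show ((i.1 + (T.n - 1)) % T.n + 1) % T.n = i.1
  rw [Nat.mod_add_mod]
  have h1 : i.1 + (T.n - 1) + 1 = i.1 + T.n := by omega
  rw [h1, Nat.add_mod_right, Nat.mod_eq_of_lt i.isLt]

lemma prv_nxt (T : Tour I) (i : Fin T.n) : T.prv (T.nxt i) = i := by
  have hn : 0 < T.n := by have := T.three_le; omega
  apply Fin.ext
  show ((i.1 + 1) % T.n + (T.n - 1)) % T.n = i.1
  rw [Nat.mod_add_mod]
  have h1 : i.1 + 1 + (T.n - 1) = i.1 + T.n := by omega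
  rw [h1, Nat.add_mod_right, Nat.mod_eq_of_lt i.isLt]

lemma mem_fwdPts (T : Tour I) (a : Fin T.n) {k m : ℕ} (hk : 0 < k) (hm : m ≤ k) :
    T.pt ((T.nxt)^[m] a) ∈ T.fwdPts a k := by
  rcases lt_or_eq_of_le hm with h | h
  · exact Set.mem_biUnion (show m ∈ Set.Iio k from h) (left_mem_segment ℝ _ _)
  · subst h
    have hkk : (T.nxt)^[m] a = T.nxt ((T.nxt)^[m - 1] a) := by
      conv_lhs => rw [show m = (m - 1) + 1 by omega]
      rw [Function.iterate_succ_apply']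
    have : T.pt ((T.nxt)^[m] a) ∈ T.leg ((T.nxt)^[m - 1] a) := by
      rw [Tour.leg, hkk]
      exact right_mem_segment ℝ _ _
    exact Set.mem_biUnion (show m - 1 ∈ Set.Iio m by simp; omega) this

lemma seg_endpoint {p q r : ℝ × ℝ} (hpq : p.1 ≠ q.1) (hr : r ∈ segment ℝ p q)
    (h : (r.1 ≤ p.1 ∧ r.1 ≤ q.1) ∨ (p.1 ≤ r.1 ∧ q.1 ≤ r.1)) : r = p ∨ r = q := by
  obtain ⟨u, v, hu, hv, huv, hval⟩ := hr
  have hx : u * p.1 + v * q.1 = r.1 := by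
    have := congrArg Prod.fst hval
    simpa using this
  have hu' : u = 1 - v := by linarith
  rw [hu'] at hx
  have hcases : v = 0 ∨ u = 0 := by
    rcases hpq.lt_or_gt with hlt | hlt <;> rcases h with ⟨h1, h2⟩ | ⟨h1, h2⟩
    · left; by_contra hv0
      have hvp : 0 < v := hv.lt_of_ne (Ne.symm hv0)
      nlinarith [mul_pos hvp (sub_pos.mpr hlt)]
    · right; by_contra hu0
      have hup : 0 < u := hu.lt_of_ne (Ne.symm hu0)
      nlinarith [mul_pos hup (sub_pos.mpr hlt)]
    · right; by_contra hu0
      have hup : 0 < u := hu.lt_of_ne (Ne.symm hu0)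
      nlinarith [mul_pos hup (sub_pos.mpr hlt)]
    · left; by_contra hv0
      have hvp : 0 < v := hv.lt_of_ne (Ne.symm hv0)
      nlinarith [mul_pos hvp (sub_pos.mpr hlt)]
  rcases hcases with hv0 | hu0
  · left
    have hu1 : u = 1 := by linarith
    rw [hv0, hu1] at hval
    simpa using hval.symm
  · right
    have hv1 : v = 1 := by linarith
    rw [hu0, hv1] at hval
    simpa using hval.symm

lemma vertex_reflection (T : Tour I) (a : Fin T.n) {k : ℕ} (hk : 0 < k)
    (hvert : ∀ i, (T.pt i).1 ≠ (T.pt (T.nxt i)).1)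
    {m : ℕ} (hm0 : 0 < m) (hmk : m < k) :
    ((∀ p ∈ T.fwdPts a k, (T.pt ((T.nxt)^[m] a)).1 ≤ p.1) →
      T.IsRightReflection ((T.nxt)^[m] a)) ∧
    ((∀ p ∈ T.fwdPts a k, p.1 ≤ (T.pt ((T.nxt)^[m] a)).1) →
      T.IsLeftReflection ((T.nxt)^[m] a)) := by
  set j := (T.nxt)^[m] a with hj
  obtain ⟨s, hs, hps⟩ := T.pt_on_seg j
  have hsx : (T.pt j).1 = s.1 := hps.1
  have hjsucc : (T.nxt)^[m] a = T.nxt ((T.nxt)^[m - 1] a) := by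
    conv_lhs => rw [show m = (m - 1) + 1 by omega]
    rw [Function.iterate_succ_apply']
  have hprv : T.prv j = (T.nxt)^[m - 1] a := by
    rw [hj, hjsucc, prv_nxt]
  have hnxt : T.nxt j = (T.nxt)^[m + 1] a := by
    rw [hj, Function.iterate_succ_apply']
  have hprv_mem : T.pt (T.prv j) ∈ T.fwdPts a k := by
    rw [hprv]; exact mem_fwdPts T a hk (by omega)
  have hnxt_mem : T.pt (T.nxt j) ∈ T.fwdPts a k := by
    rw [hnxt]; exact mem_fwdPts T a hk (by omega)
  have hprv_ne : (T.pt (T.prv j)).1 ≠ (T.pt j).1 := by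
    have := hvert (T.prv j); rwa [nxt_prv] at this
  have hnxt_ne : (T.pt j).1 ≠ (T.pt (T.nxt j)).1 := hvert j
  constructor
  · intro hmin
    refine ⟨s, hs, hps, ?_, ?_⟩
    · rw [← hsx]; exact lt_of_le_of_ne (hmin _ hprv_mem) (Ne.symm hprv_ne)
    · rw [← hsx]; exact lt_of_le_of_ne (hmin _ hnxt_mem) hnxt_ne
  · intro hmax
    refine ⟨s, hs, hps, ?_, ?_⟩
    · rw [← hsx]; exact lt_of_le_of_ne (hmax _ hprv_mem) hprv_ne
    · rw [← hsx]; exact lt_of_le_of_ne (hmax _ hnxt_mem) (Ne.symm hnxt_ne)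

end Aux

/-- If the endpoints of a subpath `P` of `OPT` both lie strictly to the
right of the vertical line `x = x₀` and `P` crosses it, then every point of `P` of
minimum `x`-coordinate is an (interior) tour vertex which is a right reflection point;
symmetrically with left/right exchanged. -/
theorem statement2 (I : TSPNInstance) (T : Tour I) (hT : T.IsOPT)
    (a : Fin T.n) (k : ℕ) (hk : 0 < k) (hkn : k < T.n) (x₀ : ℝ) :
    (x₀ < (T.pt a).1 → x₀ < (T.pt ((T.nxt)^[k] a)).1 →
      (∃ p ∈ T.fwdPts a k, p.1 < x₀) →
      ∀ r ∈ T.fwdPts a k, (∀ p ∈ T.fwdPts a k, r.1 ≤ p.1) →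
        ∃ m, 0 < m ∧ m < k ∧ r = T.pt ((T.nxt)^[m] a) ∧
          T.IsRightReflection ((T.nxt)^[m] a)) ∧
    ((T.pt a).1 < x₀ → (T.pt ((T.nxt)^[k] a)).1 < x₀ →
      (∃ p ∈ T.fwdPts a k, x₀ < p.1) →
      ∀ r ∈ T.fwdPts a k, (∀ p ∈ T.fwdPts a k, p.1 ≤ r.1) →
        ∃ m, 0 < m ∧ m < k ∧ r = T.pt ((T.nxt)^[m] a) ∧
          T.IsLeftReflection ((T.nxt)^[m] a)) := by
  obtain ⟨hFeas, hOptMin, hNoCross, hvert, hnoCons⟩ := hT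
  have vertex_of_extreme : ∀ r ∈ T.fwdPts a k,
      ((∀ p ∈ T.fwdPts a k, r.1 ≤ p.1) ∨ (∀ p ∈ T.fwdPts a k, p.1 ≤ r.1)) →
      ∃ m, m ≤ k ∧ r = T.pt ((T.nxt)^[m] a) := by
    intro r hr hext
    rw [Tour.fwdPts] at hr
    obtain ⟨m, hm, hrm⟩ := Set.mem_iUnion₂.mp hr
    have hm' : m < k := hm
    have hends : T.pt ((T.nxt)^[m] a) ∈ T.fwdPts a k := Aux.mem_fwdPts T a hk hm'.le
    have hends' : T.pt ((T.nxt)^[m + 1] a) ∈ T.fwdPts a k := Aux.mem_fwdPts T a hk hm'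
    have hne : (T.pt ((T.nxt)^[m] a)).1 ≠ (T.pt ((T.nxt)^[m + 1] a)).1 := by
      rw [Function.iterate_succ_apply']
      exact hvert _
    have hrm' : r ∈ segment ℝ (T.pt ((T.nxt)^[m] a)) (T.pt ((T.nxt)^[m + 1] a)) := by
      rw [Tour.leg] at hrm
      rwa [Function.iterate_succ_apply']
    have := Aux.seg_endpoint hne hrm' (by
      rcases hext with h | h
      · exact Or.inl ⟨h _ hends, h _ hends'⟩
      · exact Or.inr ⟨h _ hends, h _ hends'⟩)
    rcases this with h | h
    · exact ⟨m, hm'.le, h⟩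
    · exact ⟨m + 1, hm', h⟩
  constructor
  · intro h0 hk' hcross r hr hmin
    obtain ⟨p, hp, hpx⟩ := hcross
    have hrx : r.1 < x₀ := lt_of_le_of_lt (hmin p hp) hpx
    obtain ⟨m, hmk, hrm⟩ := vertex_of_extreme r hr (Or.inl hmin)
    have hm0 : 0 < m := by
      rcases Nat.eq_zero_or_pos m with h | h
      · exfalso; subst h; simp at hrm; rw [hrm] at hrx; linarith
      · exact h
    have hmk' : m < k := by
      rcases lt_or_eq_of_le hmk with h | h
      · exact h
      · exfalso; subst h; rw [hrm] at hrx; linarith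
    refine ⟨m, hm0, hmk', hrm, ?_⟩
    exact (Aux.vertex_reflection T a hk hvert hm0 hmk').1 (by rw [← hrm]; exact hmin)
  · intro h0 hk' hcross r hr hmax
    obtain ⟨p, hp, hpx⟩ := hcross
    have hrx : x₀ < r.1 := lt_of_lt_of_le hpx (hmax p hp)
    obtain ⟨m, hmk, hrm⟩ := vertex_of_extreme r hr (Or.inr hmax)
    have hm0 : 0 < m := by
      rcases Nat.eq_zero_or_pos m with h | h
      · exfalso; subst h; simp at hrm; rw [hrm] at hrx; linarith
      · exact h
    have hmk' : m < k := by
      rcases lt_or_eq_of_le hmk with h | h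
      · exact h
      · exfalso; subst h; rw [hrm] at hrx; linarith
    refine ⟨m, hm0, hmk', hrm, ?_⟩
    exact (Aux.vertex_reflection T a hk hvert hm0 hmk').2 (by rw [← hrm]; exact hmax)
end
end

section
/- Every reflection point of OPT that is not a tip (endpoint) of the input segment containing it is a pure reflection point: its two incident legs make equal angles with the containing segment. -/
noncomputable section

/- ### Auxiliary lemmas for statement 3 -/

lemma elen_comm (p q : ℝ × ℝ) : elen p q = elen q p := by
  unfold elen; congr 1; ring

namespace Tour

variable {I : TSPNInstance}

lemma my_nxt_prv (T : Tour I) (i : Fin T.n) : T.nxt (T.prv i) = i := by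
  have h3 := T.three_le
  have hi := i.isLt
  apply Fin.ext
  show ((i.1 + (T.n - 1)) % T.n + 1) % T.n = i.1
  rw [Nat.mod_add_mod]
  have h : i.1 + (T.n - 1) + 1 = i.1 + T.n := by omega
  rw [h, Nat.add_mod_right, Nat.mod_eq_of_lt hi]

lemma my_prv_nxt (T : Tour I) (i : Fin T.n) : T.prv (T.nxt i) = i := by
  have h3 := T.three_le
  have hi := i.isLt
  apply Fin.ext
  show ((i.1 + 1) % T.n + (T.n - 1)) % T.n = i.1
  rw [Nat.mod_add_mod]
  have h : i.1 + 1 + (T.n - 1) = i.1 + T.n := by omega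
  rw [h, Nat.add_mod_right, Nat.mod_eq_of_lt hi]

lemma my_nxt_ne (T : Tour I) (i : Fin T.n) : T.nxt i ≠ i := by
  have h3 := T.three_le
  have hi := i.isLt
  intro h
  have hv : (i.1 + 1) % T.n = i.1 := congrArg Fin.val h
  rcases Nat.lt_or_ge (i.1 + 1) T.n with h' | h'
  · rw [Nat.mod_eq_of_lt h'] at hv; omega
  · have he : i.1 + 1 = T.n := by omega
    rw [he, Nat.mod_self] at hv; omega

lemma my_prv_ne (T : Tour I) (i : Fin T.n) : T.prv i ≠ i := by
  intro h
  have := T.my_nxt_prv i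
  rw [h] at this
  exact T.my_nxt_ne i this

lemma my_nxt_inj (T : Tour I) {a b : Fin T.n} (h : T.nxt a = T.nxt b) : a = b := by
  have := congrArg T.prv h
  rwa [T.my_prv_nxt, T.my_prv_nxt] at this

/-- Tour obtained by moving the `i`-th point to `(s.1, y)` on segment `s`. -/
def move (T : Tour I) (i : Fin T.n) (s : ℝ × ℝ) (hs : s ∈ I.segs)
    (y : ℝ) (hy1 : s.2 ≤ y) (hy2 : y ≤ s.2 + 1) : Tour I where
  n := T.n
  three_le := T.three_le
  pt := fun j => if j = i then (s.1, y) else T.pt j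
  pt_on_seg := fun j => by
    by_cases hj : j = i
    · exact ⟨s, hs, by simp [hj, segPts, hy1, hy2]⟩
    · simpa [hj] using T.pt_on_seg j

end Tour

/-- Every reflection point of `OPT` that is not a tip of the input
segment containing it is a pure reflection point. -/
theorem statement3 (I : TSPNInstance) (T : Tour I) (hT : T.IsOPT) (i : Fin T.n)
    (hrefl : T.IsReflection i)
    (hnotip : ∀ s ∈ I.segs, T.pt i ∈ segPts s → ¬ IsTip s (T.pt i)) :
    T.IsPureReflection i := by
  -- extract a containing segment with both neighbours off the vertical line
  obtain ⟨s, hs, hps, hax, hbx⟩ :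
      ∃ s ∈ I.segs, T.pt i ∈ segPts s ∧
        (T.pt (T.prv i)).1 ≠ s.1 ∧ (T.pt (T.nxt i)).1 ≠ s.1 := by
    rcases hrefl with ⟨s, hs, hp, h1, h2⟩ | ⟨s, hs, hp, h1, h2⟩
    · exact ⟨s, hs, hp, ne_of_lt h1, ne_of_lt h2⟩
    · exact ⟨s, hs, hp, ne_of_gt h1, ne_of_gt h2⟩
  set a := T.pt (T.prv i) with ha
  set b := T.pt (T.nxt i) with hb
  set p := T.pt i with hp
  obtain ⟨hx, hy1, hy2⟩ := hps
  -- strict bounds from non-tip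
  have hnt := hnotip s hs ⟨hx, hy1, hy2⟩
  have hlo : s.2 < p.2 := by
    rcases lt_or_eq_of_le hy1 with h | h
    · exact h
    · exfalso; apply hnt; left; exact Prod.ext hx h.symm
  have hhi : p.2 < s.2 + 1 := by
    rcases lt_or_eq_of_le hy2 with h | h
    · exact h
    · exfalso; apply hnt; right; exact Prod.ext hx h
  -- key perturbation inequality
  have key : ∀ y : ℝ, s.2 ≤ y → y ≤ s.2 + 1 →
      elen a p + elen p b ≤ elen a (s.1, y) + elen (s.1, y) b := by
    intro y hy1' hy2'
    set T' : Tour I := T.move i s hs y hy1' hy2' with hT'def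
    have hfeas : T'.Feasible := by
      intro s'' hs''
      obtain ⟨j, hj⟩ := hT.1 s'' hs''
      by_cases hji : j = i
      · have hseq : s'' = s := by
          apply I.distinct_x s'' hs'' s hs
          have hpj : (T.pt j).1 = s.1 := by rw [hji]; exact hx
          rw [← hj.1]; exact hpj
        refine ⟨i, ?_⟩
        show (if i = i then ((s.1, y) : ℝ × ℝ) else T.pt i) ∈ segPts s''
        simp [hseq, segPts, hy1', hy2']
      · refine ⟨j, ?_⟩
        show (if j = i then ((s.1, y) : ℝ × ℝ) else T.pt j) ∈ segPts s''
        simpa [hji] using hj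
    have hcost := hT.2.1 T' hfeas
    -- rewrite both costs via a split over {prv i, i}
    have hpair : (T.prv i) ≠ i := T.my_prv_ne i
    have hsub : ({T.prv i, i} : Finset (Fin T.n)) ⊆ Finset.univ := Finset.subset_univ _
    have hsplit : ∀ h : Fin T.n → ℝ,
        ∑ j, h j = ∑ j ∈ Finset.univ \ {T.prv i, i}, h j + (h (T.prv i) + h i) := by
      intro h
      rw [← Finset.sum_sdiff hsub, Finset.sum_pair hpair]
    have hcostT : T.cost = ∑ j ∈ Finset.univ \ {T.prv i, i},
        elen (T.pt j) (T.pt (T.nxt j)) + (elen a p + elen p b) := by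
      rw [Tour.cost, hsplit]
      congr 2
      rw [T.my_nxt_prv]
    have hptT' : ∀ j : Fin T.n,
        T'.pt j = if j = i then (s.1, y) else T.pt j := fun _ => rfl
    have hnxtT' : ∀ j : Fin T.n, T'.nxt j = T.nxt j := fun _ => rfl
    have hcostT' : T'.cost = ∑ j ∈ Finset.univ \ {T.prv i, i},
        elen (T.pt j) (T.pt (T.nxt j)) + (elen a (s.1, y) + elen (s.1, y) b) := by
      have hTc : T'.cost = ∑ j : Fin T.n, elen (T'.pt j) (T'.pt (T'.nxt j)) := rfl
      rw [hTc, hsplit (fun j => elen (T'.pt j) (T'.pt (T'.nxt j)))]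
      congr 1
      · apply Finset.sum_congr rfl
        intro j hj
        simp only [Finset.mem_sdiff, Finset.mem_insert, Finset.mem_singleton] at hj
        have hji : j ≠ i := fun h => hj.2 (Or.inr h)
        have hnji : T.nxt j ≠ i := by
          intro h
          apply hj.2
          left
          apply T.my_nxt_inj
          rw [h, T.my_nxt_prv]
        rw [hnxtT', hptT', hptT', if_neg hji, if_neg hnji]
      · simp only [hnxtT', hptT', T.my_nxt_prv]
        simp [← ha, ← hb, hpair, T.my_nxt_ne i]
    rw [hcostT, hcostT'] at hcost
    linarith
  -- set up the one-variable function and its local minimum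
  set La := elen a p with hLa_def
  set Lb := elen p b with hLb_def
  have hax' : a.1 - s.1 ≠ 0 := sub_ne_zero.mpr hax
  have hbx' : s.1 - b.1 ≠ 0 := fun h => hbx (sub_eq_zero.mp h).symm
  have hLa_eq : La = Real.sqrt ((a.1 - s.1) ^ 2 + (a.2 - p.2) ^ 2) := by
    rw [hLa_def, elen_comm]
    unfold elen
    rw [hx]
    congr 1
    ring
  have hLb_eq : Lb = Real.sqrt ((s.1 - b.1) ^ 2 + (p.2 - b.2) ^ 2) := by
    rw [hLb_def]
    unfold elen
    rw [hx]
  have hposA : 0 < (a.1 - s.1) ^ 2 + (a.2 - p.2) ^ 2 := by positivity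
  have hposB : 0 < (s.1 - b.1) ^ 2 + (p.2 - b.2) ^ 2 := by positivity
  have hLa_pos : 0 < La := by rw [hLa_eq]; exact Real.sqrt_pos.mpr hposA
  have hLb_pos : 0 < Lb := by rw [hLb_eq]; exact Real.sqrt_pos.mpr hposB
  set f : ℝ → ℝ := fun y =>
    Real.sqrt ((a.1 - s.1) ^ 2 + (a.2 - y) ^ 2) +
      Real.sqrt ((s.1 - b.1) ^ 2 + (y - b.2) ^ 2) with hf_def
  have hfp : f p.2 = La + Lb := by rw [hf_def, hLa_eq, hLb_eq]
  have hfy : ∀ y : ℝ, f y = elen a (s.1, y) + elen (s.1, y) b := by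
    intro y
    rw [hf_def]
    unfold elen
    simp only
  have hmin : IsLocalMin f p.2 := by
    have hnb : Set.Ioo s.2 (s.2 + 1) ∈ nhds p.2 := Ioo_mem_nhds hlo hhi
    filter_upwards [hnb] with y hy
    rw [hfp, hfy]
    exact key y hy.1.le hy.2.le
  -- derivative of f at p.2
  have hd1 : HasDerivAt (fun y : ℝ => Real.sqrt ((a.1 - s.1) ^ 2 + (a.2 - y) ^ 2))
      ((p.2 - a.2) / La) p.2 := by
    have h0 : HasDerivAt (fun y : ℝ => a.2 - y) (-1) p.2 := by
      simpa using (hasDerivAt_id p.2).const_sub a.2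
    have h1 : HasDerivAt (fun y : ℝ => (a.2 - y) ^ 2)
        ((2 : ℕ) * (a.2 - p.2) ^ 1 * (-1)) p.2 := h0.pow 2
    have h2 : HasDerivAt (fun y : ℝ => (a.1 - s.1) ^ 2 + (a.2 - y) ^ 2)
        ((2 : ℕ) * (a.2 - p.2) ^ 1 * (-1)) p.2 := h1.const_add _
    have h3 := h2.sqrt (ne_of_gt hposA)
    convert h3 using 1
    rw [← hLa_eq]
    field_simp
    ring
  have hd2 : HasDerivAt (fun y : ℝ => Real.sqrt ((s.1 - b.1) ^ 2 + (y - b.2) ^ 2))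
      ((p.2 - b.2) / Lb) p.2 := by
    have h0 : HasDerivAt (fun y : ℝ => y - b.2) 1 p.2 := by
      simpa using (hasDerivAt_id p.2).sub_const b.2
    have h1 : HasDerivAt (fun y : ℝ => (y - b.2) ^ 2)
        ((2 : ℕ) * (p.2 - b.2) ^ 1 * 1) p.2 := h0.pow 2
    have h2 : HasDerivAt (fun y : ℝ => (s.1 - b.1) ^ 2 + (y - b.2) ^ 2)
        ((2 : ℕ) * (p.2 - b.2) ^ 1 * 1) p.2 := h1.const_add _
    have h3 := h2.sqrt (ne_of_gt hposB)
    convert h3 using 1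
    rw [← hLb_eq]
    field_simp
    ring
  have hderiv : HasDerivAt f ((p.2 - a.2) / La + (p.2 - b.2) / Lb) p.2 := hd1.add hd2
  have hzero : (p.2 - a.2) / La + (p.2 - b.2) / Lb = 0 :=
    hmin.hasDerivAt_eq_zero hderiv
  -- conclude purity
  have hcross : (p.2 - a.2) * Lb = (b.2 - p.2) * La := by
    have hLa0 : La ≠ 0 := ne_of_gt hLa_pos
    have hLb0 : Lb ≠ 0 := ne_of_gt hLb_pos
    field_simp at hzero
    linarith
  refine ⟨hrefl, ?_⟩
  have habs : |p.2 - a.2| * Lb = |b.2 - p.2| * La := by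
    have := congrArg abs hcross
    rwa [abs_mul, abs_mul, abs_of_pos hLa_pos, abs_of_pos hLb_pos] at this
  calc |a.2 - p.2| * elen p b = |p.2 - a.2| * Lb := by
        rw [abs_sub_comm, hLb_def]
      _ = |b.2 - p.2| * La := habs
      _ = |b.2 - p.2| * elen p (T.pt (T.prv i)) := by
        rw [hLa_def, elen_comm, ha]
end
end

section
/- Let P be a subpath of OPT, given by consecutive tour points p_a, p_{a+1}, …, p_b, none of whose interior vertices p_j (a < j < b) is a reflection point. Then the sequence of x-coordinates x(p_a), x(p_{a+1}), …, x(p_b) is monotone (non-decreasing or non-increasing); consequently, for every x₀ ∈ ℝ that is not the x-coordinate of a vertex of P, at most one leg of P intersects the vertical line x = x₀. -/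
noncomputable section

/-- A subpath of `OPT` none of whose interior vertices is a reflection
point has monotone `x`-coordinates; consequently, every vertical line avoiding the
`x`-coordinates of its vertices meets at most one of its legs. -/
theorem statement4 (I : TSPNInstance) (T : Tour I) (hT : T.IsOPT)
    (a : Fin T.n) (k : ℕ) (hkn : k < T.n)
    (hint : ∀ m, 0 < m → m < k → ¬ T.IsReflection ((T.nxt)^[m] a)) :
    ((∀ m < k, (T.pt ((T.nxt)^[m] a)).1 ≤ (T.pt ((T.nxt)^[m + 1] a)).1) ∨
     (∀ m < k, (T.pt ((T.nxt)^[m + 1] a)).1 ≤ (T.pt ((T.nxt)^[m] a)).1)) ∧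
    (∀ x₀ : ℝ, (∀ m ≤ k, (T.pt ((T.nxt)^[m] a)).1 ≠ x₀) →
      {m : ℕ | m < k ∧ ∃ p ∈ T.leg ((T.nxt)^[m] a), p.1 = x₀}.ncard ≤ 1) := by

  classical
  have hn3 := T.three_le
  have hnv := hT.2.2.2.1
  -- prv ∘ nxt = id
  have hpn : ∀ i : Fin T.n, T.prv (T.nxt i) = i := by
    intro i
    apply Fin.ext
    show ((↑i + 1) % T.n + (T.n - 1)) % T.n = ↑i
    rw [Nat.mod_add_mod]
    have h : (↑i : ℕ) + 1 + (T.n - 1) = ↑i + T.n := by omega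
    rw [h, Nat.add_mod_right]
    exact Nat.mod_eq_of_lt i.isLt
  set q : ℕ → ℝ := fun m => (T.pt ((T.nxt)^[m] a)).1 with hq
  have hne : ∀ m : ℕ, q m ≠ q (m + 1) := by
    intro m
    show (T.pt ((T.nxt)^[m] a)).1 ≠ (T.pt ((T.nxt)^[m+1] a)).1
    rw [Function.iterate_succ_apply']
    exact hnv _
  have hstep : ∀ m : ℕ, m + 1 < k → (q m < q (m + 1) ↔ q (m + 1) < q (m + 2)) := by
    intro m hm
    set j := (T.nxt)^[m + 1] a with hj
    have hprv : T.prv j = (T.nxt)^[m] a := by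
      rw [hj, Function.iterate_succ_apply', hpn]
    have hnxt : T.nxt j = (T.nxt)^[m + 2] a := by
      rw [hj]; exact (Function.iterate_succ_apply' T.nxt (m + 1) a).symm
    have hrefl := hint (m + 1) (Nat.succ_pos m) hm
    obtain ⟨s, hs, hmem⟩ := T.pt_on_seg j
    have hsx : s.1 = (T.pt j).1 := hmem.1.symm
    have h1 : ¬ ((T.pt (T.prv j)).1 < s.1 ∧ (T.pt (T.nxt j)).1 < s.1) := by
      intro h; exact hrefl (Or.inl ⟨s, hs, hmem, h.1, h.2⟩)
    have h2 : ¬ (s.1 < (T.pt (T.prv j)).1 ∧ s.1 < (T.pt (T.nxt j)).1) := by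
      intro h; exact hrefl (Or.inr ⟨s, hs, hmem, h.1, h.2⟩)
    rw [hsx] at h1 h2
    have hp : (T.pt (T.prv j)).1 ≠ (T.pt j).1 := by rw [hprv]; exact hne m
    have hn : (T.pt j).1 ≠ (T.pt (T.nxt j)).1 := hnv j
    have e1 : q m = (T.pt (T.prv j)).1 := by rw [hprv]
    have e2 : q (m + 1) = (T.pt j).1 := rfl
    have e3 : q (m + 2) = (T.pt (T.nxt j)).1 := by rw [hnxt]
    rw [e1, e2, e3]
    constructor
    · intro h
      rcases lt_or_gt_of_ne hn with h' | h'
      · exact h'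
      · exact absurd ⟨h, h'⟩ h1
    · intro h
      rcases lt_or_gt_of_ne hp with h' | h'
      · exact h'
      · exact absurd ⟨h', h⟩ h2
  have mono : (∀ m, m < k → q m < q (m + 1)) ∨ (∀ m, m < k → q (m + 1) < q m) := by
    rcases Nat.eq_zero_or_pos k with hk | hk
    · left; intro m hm; omega
    rcases lt_or_gt_of_ne (hne 0) with h | h
    · left; intro m
      induction m with
      | zero => intro _; exact h
      | succ n ih => intro hm; exact (hstep n hm).mp (ih (by omega))
    · right; intro m
      induction m with
      | zero => intro _; exact h
      | succ n ih =>
        intro hm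
        have h1 := ih (by omega)
        rcases lt_or_gt_of_ne (hne (n + 1)) with h2 | h2
        · exact absurd ((hstep n hm).mpr h2) (not_lt.mpr (le_of_lt h1))
        · exact h2
  have chain : ∀ (f : ℕ → ℝ), (∀ m, m < k → f m ≤ f (m + 1)) →
      ∀ j, j ≤ k → ∀ i, i ≤ j → f i ≤ f j := by
    intro f hf j
    induction j with
    | zero => intro _ i hi; rw [Nat.le_zero.mp hi]
    | succ n ih =>
      intro hjk i hi
      rcases Nat.eq_or_lt_of_le hi with h | h
      · rw [h]
      · exact le_trans (ih (by omega) i (by omega)) (hf n (by omega))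
  have hseg : ∀ (u v p : ℝ × ℝ), p ∈ segment ℝ u v →
      min u.1 v.1 ≤ p.1 ∧ p.1 ≤ max u.1 v.1 := by
    intro u v p hp
    obtain ⟨α, β, hα, hβ, hαβ, hsum⟩ := hp
    have h1 : p.1 = α * u.1 + β * v.1 := by
      have h := congrArg Prod.fst hsum
      simp only [Prod.fst_add, Prod.smul_fst, smul_eq_mul] at h
      exact h.symm
    have t1 : α * (u.1 ⊓ v.1) ≤ α * u.1 := mul_le_mul_of_nonneg_left (min_le_left _ _) hα
    have t2 : β * (u.1 ⊓ v.1) ≤ β * v.1 := mul_le_mul_of_nonneg_left (min_le_right _ _) hβ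
    have t3 : α * u.1 ≤ α * (u.1 ⊔ v.1) := mul_le_mul_of_nonneg_left (le_max_left _ _) hα
    have t4 : β * v.1 ≤ β * (u.1 ⊔ v.1) := mul_le_mul_of_nonneg_left (le_max_right _ _) hβ
    have e1 : α * (u.1 ⊓ v.1) + β * (u.1 ⊓ v.1) = u.1 ⊓ v.1 := by
      rw [← add_mul, hαβ, one_mul]
    have e2 : α * (u.1 ⊔ v.1) + β * (u.1 ⊔ v.1) = u.1 ⊔ v.1 := by
      rw [← add_mul, hαβ, one_mul]
    constructor
    · linarith
    · linarith
  constructor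
  · rcases mono with h | h
    · left; intro m hm; exact le_of_lt (h m hm)
    · right; intro m hm; exact le_of_lt (h m hm)
  · intro x₀ hx
    have key : ∀ m, m < k → (∃ p ∈ T.leg ((T.nxt)^[m] a), p.1 = x₀) →
        min (q m) (q (m + 1)) < x₀ ∧ x₀ < max (q m) (q (m + 1)) := by
      intro m hm ⟨p, hp, hpx⟩
      have hp' : p ∈ segment ℝ (T.pt ((T.nxt)^[m] a)) (T.pt ((T.nxt)^[m + 1] a)) := by
        rw [Function.iterate_succ_apply']
        exact hp
      have hb := hseg _ _ p hp'
      rw [hpx] at hb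
      constructor
      · rcases min_cases (q m) (q (m + 1)) with ⟨he, _⟩ | ⟨he, _⟩
        · exact lt_of_le_of_ne hb.1 (by rw [he]; exact hx m (by omega))
        · exact lt_of_le_of_ne hb.1 (by rw [he]; exact hx (m + 1) (by omega))
      · rcases max_cases (q m) (q (m + 1)) with ⟨he, _⟩ | ⟨he, _⟩
        · exact lt_of_le_of_ne hb.2 (by rw [he]; exact Ne.symm (hx m (by omega)))
        · exact lt_of_le_of_ne hb.2 (by rw [he]; exact Ne.symm (hx (m + 1) (by omega)))
    have H : ∀ m m', m < m' → m < k → m' < k →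
        (∃ p ∈ T.leg ((T.nxt)^[m] a), p.1 = x₀) →
        (∃ p ∈ T.leg ((T.nxt)^[m'] a), p.1 = x₀) → False := by
      intro m m' hmm hmk hm'k h1 h2
      obtain ⟨h1a, h1b⟩ := key m hmk h1
      obtain ⟨h2a, h2b⟩ := key m' hm'k h2
      rcases mono with hinc | hdec
      · have hch : q (m + 1) ≤ q m' :=
          chain q (fun m hm => le_of_lt (hinc m hm)) m' (by omega) (m + 1) (by omega)
        rw [max_eq_right (le_of_lt (hinc m hmk))] at h1b
        rw [min_eq_left (le_of_lt (hinc m' hm'k))] at h2a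
        linarith
      · have hch : (fun m => -q m) (m + 1) ≤ (fun m => -q m) m' :=
          chain (fun m => -q m) (fun m hm => by simpa using le_of_lt (hdec m hm))
            m' (by omega) (m + 1) (by omega)
        simp only [neg_le_neg_iff] at hch
        rw [min_eq_right (le_of_lt (hdec m hmk))] at h1a
        rw [max_eq_left (le_of_lt (hdec m' hm'k))] at h2b
        linarith
    have hss : {m : ℕ | m < k ∧ ∃ p ∈ T.leg ((T.nxt)^[m] a), p.1 = x₀}.Subsingleton := by
      intro m hm m' hm'
      by_contra hne'
      rcases Nat.lt_or_ge m m' with h | h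
      · exact H m m' h hm.1 hm'.1 hm.2 hm'.2
      · exact H m' m (by omega) hm'.1 hm.1 hm'.2 hm.2
    rcases hss.eq_empty_or_singleton with h | ⟨x, h⟩
    · rw [h]; simp
    · rw [h]; simp
end
end

section
/- For any two tour vertices p and p' of OPT with x(p) ≠ x(p'), at least one of the two arcs of OPT between p and p' (following the cyclic orientation from p to p', or from p' to p) contains a reflection point. -/
noncomputable section

section Aux

variable {I : TSPNInstance} (T : Tour I)

lemma aux_npos : 0 < T.n := by have := T.three_le; omega

lemma aux_prv_nxt (v : Fin T.n) : T.prv (T.nxt v) = v := by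
  have hn := T.three_le
  apply Fin.ext
  simp only [Tour.nxt, Tour.prv]
  have hv := v.2
  calc ((v.1 + 1) % T.n + (T.n - 1)) % T.n
      = (v.1 + 1 + (T.n - 1)) % T.n := Nat.mod_add_mod _ _ _
    _ = (v.1 + T.n) % T.n := by congr 1; omega
    _ = v.1 % T.n := Nat.add_mod_right _ _
    _ = v.1 := Nat.mod_eq_of_lt hv

lemma aux_iter_nxt (v : Fin T.n) (m : ℕ) :
    ((T.nxt)^[m] v).1 = (v.1 + m) % T.n := by
  induction m with
  | zero => simp [Nat.mod_eq_of_lt v.2]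
  | succ m ih =>
      rw [Function.iterate_succ_apply']
      simp only [Tour.nxt]
      rw [ih]
      calc ((v.1 + m) % T.n + 1) % T.n = (v.1 + m + 1) % T.n := Nat.mod_add_mod _ _ _
        _ = (v.1 + (m + 1)) % T.n := by ring_nf

lemma aux_iter_nxt_n (v : Fin T.n) : (T.nxt)^[T.n] v = v := by
  apply Fin.ext
  rw [aux_iter_nxt]
  calc (v.1 + T.n) % T.n = v.1 % T.n := Nat.add_mod_right _ _
    _ = v.1 := Nat.mod_eq_of_lt v.2

lemma aux_surj (i w : Fin T.n) : ∃ m < T.n, (T.nxt)^[m] i = w := by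
  have hn : 0 < T.n := aux_npos T
  refine ⟨(w.1 + T.n - i.1) % T.n, Nat.mod_lt _ hn, ?_⟩
  apply Fin.ext
  rw [aux_iter_nxt]
  have hi := i.2
  calc (i.1 + (w.1 + T.n - i.1) % T.n) % T.n
      = (i.1 + (w.1 + T.n - i.1)) % T.n := Nat.add_mod_mod _ _ _
    _ = (w.1 + T.n) % T.n := by congr 1; omega
    _ = w.1 % T.n := Nat.add_mod_right _ _
    _ = w.1 := Nat.mod_eq_of_lt w.2

lemma aux_step_inc (hne : ∀ w, (T.pt w).1 ≠ (T.pt (T.nxt w)).1)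
    (hnr : ∀ w, ¬ T.IsReflection w) (v : Fin T.n)
    (h : (T.pt (T.prv v)).1 < (T.pt v).1) :
    (T.pt v).1 < (T.pt (T.nxt v)).1 := by
  obtain ⟨s, hs, hps⟩ := T.pt_on_seg v
  have hx : (T.pt v).1 = s.1 := hps.1
  have hnl : ¬ T.IsLeftReflection v := fun hl => hnr v (Or.inl hl)
  have hb : ¬ ((T.pt (T.prv v)).1 < s.1 ∧ (T.pt (T.nxt v)).1 < s.1) :=
    fun hc => hnl ⟨s, hs, hps, hc⟩
  have hne2 : (T.pt v).1 ≠ (T.pt (T.nxt v)).1 := hne v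
  rw [hx] at h hne2 ⊢
  rcases lt_trichotomy s.1 (T.pt (T.nxt v)).1 with h' | h' | h'
  · exact h'
  · exact absurd h' hne2
  · exact absurd ⟨h, h'⟩ hb

lemma aux_step_dec (hne : ∀ w, (T.pt w).1 ≠ (T.pt (T.nxt w)).1)
    (hnr : ∀ w, ¬ T.IsReflection w) (v : Fin T.n)
    (h : (T.pt v).1 < (T.pt (T.prv v)).1) :
    (T.pt (T.nxt v)).1 < (T.pt v).1 := by
  obtain ⟨s, hs, hps⟩ := T.pt_on_seg v
  have hx : (T.pt v).1 = s.1 := hps.1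
  have hnl : ¬ T.IsRightReflection v := fun hl => hnr v (Or.inr hl)
  have hb : ¬ (s.1 < (T.pt (T.prv v)).1 ∧ s.1 < (T.pt (T.nxt v)).1) :=
    fun hc => hnl ⟨s, hs, hps, hc⟩
  have hne2 : (T.pt v).1 ≠ (T.pt (T.nxt v)).1 := hne v
  rw [hx] at h hne2 ⊢
  rcases lt_trichotomy (T.pt (T.nxt v)).1 s.1 with h' | h' | h'
  · exact h'
  · exact absurd h'.symm hne2
  · exact absurd ⟨h, h'⟩ hb

lemma aux_no_refl_false (hne : ∀ w, (T.pt w).1 ≠ (T.pt (T.nxt w)).1)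
    (hnr : ∀ w, ¬ T.IsReflection w) : False := by
  obtain ⟨i⟩ : Nonempty (Fin T.n) := ⟨⟨0, aux_npos T⟩⟩
  set f : ℕ → ℝ := fun m => (T.pt ((T.nxt)^[m] i)).1 with hf
  have hfn : f T.n = f 0 := by simp [hf, aux_iter_nxt_n]
  have hstep : ∀ m, T.prv ((T.nxt)^[m + 1] i) = (T.nxt)^[m] i := by
    intro m; rw [Function.iterate_succ_apply', aux_prv_nxt]
  have h01 : f 0 ≠ f 1 := by
    simpa [hf] using hne i
  rcases lt_or_gt_of_ne h01 with hlt | hgt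
  · have mono : ∀ m, f m < f (m + 1) := by
      intro m
      induction m with
      | zero => exact hlt
      | succ m ih =>
          have := aux_step_inc T hne hnr ((T.nxt)^[m + 1] i) (by rw [hstep m]; exact ih)
          simpa [hf, Function.iterate_succ_apply' T.nxt (m + 1) i] using this
    have : f 0 < f T.n := (strictMono_nat_of_lt_succ mono) (aux_npos T)
    rw [hfn] at this; exact lt_irrefl _ this
  · have mono : ∀ m, f (m + 1) < f m := by
      intro m
      induction m with
      | zero => exact hgt
      | succ m ih =>
          have := aux_step_dec T hne hnr ((T.nxt)^[m + 1] i) (by rw [hstep m]; exact ih)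
          simpa [hf, Function.iterate_succ_apply' T.nxt (m + 1) i] using this
    have : f T.n < f 0 := (strictAnti_nat_of_succ_lt mono) (aux_npos T)
    rw [hfn] at this; exact lt_irrefl _ this

/-- For any two tour vertices of `OPT` with different `x`-coordinates,
at least one of the two arcs of `OPT` between them contains a reflection point. -/
theorem statement5 (I : TSPNInstance) (T : Tour I) (hT : T.IsOPT)
    (i j : Fin T.n) (k : ℕ) (hkn : k ≤ T.n) (hk : (T.nxt)^[k] i = j)
    (hx : (T.pt i).1 ≠ (T.pt j).1) :
    (∃ m ≤ k, T.IsReflection ((T.nxt)^[m] i)) ∨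
    (∃ m ≤ T.n - k, T.IsReflection ((T.nxt)^[m] j)) := by
  by_contra hcon
  push_neg at hcon
  obtain ⟨h1, h2⟩ := hcon
  have hne : ∀ w, (T.pt w).1 ≠ (T.pt (T.nxt w)).1 := hT.2.2.2.1
  have hnr : ∀ w, ¬ T.IsReflection w := by
    intro w hw
    obtain ⟨m, hm, hmw⟩ := aux_surj T i w
    by_cases hmk : m ≤ k
    · exact h1 m hmk (hmw ▸ hw)
    · have : (T.nxt)^[m - k] j = w := by
        rw [← hk, ← Function.iterate_add_apply]
        rw [show m - k + k = m by omega]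
        exact hmw
      exact h2 (m - k) (by omega) (this ▸ hw)
  exact aux_no_refl_false T hne hnr

end Aux
end
end

section
/- Let r be a right reflection point of OPT with incident legs ℓ and ℓ', where ℓ is above ℓ' (every point of ℓ has strictly larger y-coordinate than every point of ℓ'). Let P₁ and P₂ be subpaths of OPT having r as an endpoint, with the first leg of P₁ being ℓ and the first leg of P₂ being ℓ', and suppose neither P₁ nor P₂ contains a reflection point other than possibly r. If some vertical line x = x₁ with x₁ > x(r) intersects both P₁ and P₂, then P₁ is above P₂ on the interval [x(r), x₁]. -/
noncomputable section

namespace Stmt6Aux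

def lineY (A B : ℝ × ℝ) (x : ℝ) : ℝ := A.2 + (x - A.1) * ((B.2 - A.2) / (B.1 - A.1))

lemma lineY_left (A B : ℝ × ℝ) : lineY A B A.1 = A.2 := by simp [lineY]

lemma seg_x_bounds {A B p : ℝ × ℝ} (hAB : A.1 ≤ B.1) (hp : p ∈ segment ℝ A B) :
    A.1 ≤ p.1 ∧ p.1 ≤ B.1 := by
  rw [segment_eq_image] at hp
  obtain ⟨θ, ⟨h0, h1⟩, rfl⟩ := hp
  constructor <;> simp [Prod.fst_add, Prod.smul_fst, smul_eq_mul] <;> nlinarith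

lemma seg_snd_eq {A B p : ℝ × ℝ} (hAB : A.1 < B.1) (hp : p ∈ segment ℝ A B) :
    p.2 = lineY A B p.1 := by
  have hne : B.1 - A.1 ≠ 0 := ne_of_gt (by linarith)
  rw [segment_eq_image] at hp
  obtain ⟨θ, ⟨h0, h1⟩, rfl⟩ := hp
  simp only [lineY, Prod.fst_add, Prod.snd_add, Prod.smul_fst, Prod.smul_snd, smul_eq_mul]
  field_simp
  ring

lemma seg_mem_of_x {A B : ℝ × ℝ} (hAB : A.1 < B.1) {x : ℝ} (h1 : A.1 ≤ x) (h2 : x ≤ B.1) :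
    (x, lineY A B x) ∈ segment ℝ A B := by
  have hne : B.1 - A.1 ≠ 0 := ne_of_gt (by linarith)
  rw [segment_eq_image]
  refine ⟨(x - A.1) / (B.1 - A.1), ⟨div_nonneg (by linarith) (by linarith),
    (div_le_one (by linarith)).2 (by linarith)⟩, ?_⟩
  apply Prod.ext <;>
    simp only [lineY, Prod.fst_add, Prod.snd_add, Prod.smul_fst, Prod.smul_snd, smul_eq_mul] <;>
    field_simp <;> ring

lemma above_key (v w : ℕ → ℝ × ℝ) (k₁ k₂ : ℕ) (h0 : v 0 = w 0)
    (hv : ∀ m, m < k₁ → (v m).1 < (v (m + 1)).1)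
    (hw : ∀ m, m < k₂ → (w m).1 < (w (m + 1)).1)
    (habove : ∀ p ∈ segment ℝ (v 0) (v 1), ∀ q ∈ segment ℝ (w 0) (w 1),
      p ≠ v 0 → q ≠ v 0 → q.2 < p.2)
    (hint : ∀ a, a < k₁ → ∀ b, b < k₂ → ∀ z, z ∈ segment ℝ (v a) (v (a + 1)) →
      z ∈ segment ℝ (w b) (w (b + 1)) →
      (a = 0 ∧ b = 0) ∨ (a + 1 = k₁ ∧ b + 1 = k₂ ∧ v (a + 1) = w (b + 1))) :
    ∀ a, a < k₁ → ∀ b, b < k₂ → ∀ p ∈ segment ℝ (v a) (v (a + 1)),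
      ∀ q ∈ segment ℝ (w b) (w (b + 1)), p.1 = q.1 → q.2 ≤ p.2 := by
  -- global strict monotonicity of vertex x-coordinates
  have vmono : ∀ n, n ≤ k₁ → ∀ m, m < n → (v m).1 < (v n).1 := by
    intro n
    induction n with
    | zero => omega
    | succ n ih =>
      intro hn m hm
      have h2 := hv n (by omega)
      rcases Nat.lt_succ_iff_lt_or_eq.mp hm with h | h
      · exact lt_trans (ih (by omega) m h) h2
      · subst h; exact h2
  have wmono : ∀ n, n ≤ k₂ → ∀ m, m < n → (w m).1 < (w n).1 := by
    intro n
    induction n with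
    | zero => omega
    | succ n ih =>
      intro hn m hm
      have h2 := hw n (by omega)
      rcases Nat.lt_succ_iff_lt_or_eq.mp hm with h | h
      · exact lt_trans (ih (by omega) m h) h2
      · subst h; exact h2
  suffices H : ∀ N, ∀ a b, a + b = N → a < k₁ → b < k₂ →
      ∀ p ∈ segment ℝ (v a) (v (a + 1)), ∀ q ∈ segment ℝ (w b) (w (b + 1)),
        p.1 = q.1 → q.2 ≤ p.2 by
    exact fun a ha b hb p hp q hq hx => H (a + b) a b rfl ha hb p hp q hq hx
  intro N
  induction N using Nat.strong_induction_on with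
  | _ N IH =>
  intro a b hab ha hb p hp q hq hx
  have hAB : (v a).1 < (v (a + 1)).1 := hv a ha
  have hCD : (w b).1 < (w (b + 1)).1 := hw b hb
  have hpx := seg_x_bounds (le_of_lt hAB) hp
  have hqx := seg_x_bounds (le_of_lt hCD) hq
  have hp2 : p.2 = lineY (v a) (v (a + 1)) p.1 := seg_snd_eq hAB hp
  have hq2 : q.2 = lineY (w b) (w (b + 1)) q.1 := seg_snd_eq hCD hq
  have hv0a : (v 0).1 ≤ (v a).1 := by
    rcases Nat.eq_zero_or_pos a with h | h
    · rw [h]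
    · exact le_of_lt (vmono a (le_of_lt ha) 0 h)
  -- Case: the common x-coordinate is the start
  by_cases hx0 : p.1 = (v 0).1
  · -- then a = 0, b = 0, p = q = start point
    have ha0 : a = 0 := by
      by_contra h
      have := vmono a (le_of_lt ha) 0 (Nat.pos_of_ne_zero h)
      linarith [hpx.1]
    have hb0 : b = 0 := by
      by_contra h
      have := wmono b (le_of_lt hb) 0 (Nat.pos_of_ne_zero h)
      have : (w 0).1 < q.1 := lt_of_lt_of_le this hqx.1
      rw [← h0] at this
      linarith [hx ▸ hx0]
    subst ha0; subst hb0
    have hpA : p.1 = (v 0).1 := hx0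
    have hqC : q.1 = (w 0).1 := by rw [← hx, hx0, h0]
    rw [hp2, hpA, lineY_left]
    rw [hq2, hqC, lineY_left]
    rw [h0]
  · have hx0' : (v 0).1 < p.1 := lt_of_le_of_ne (le_trans hv0a hpx.1) (Ne.symm hx0)
    have hpne : p ≠ v 0 := fun h => hx0 (by rw [h])
    have hqne : q ≠ v 0 := fun h => hx0 (by rw [hx, h])
    by_cases hab0 : a = 0 ∧ b = 0
    · obtain ⟨ha0, hb0⟩ := hab0
      subst ha0; subst hb0
      exact le_of_lt (habove p hp q hq hpne hqne)
    -- main contradiction argument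
    by_contra hlt
    push_neg at hlt
    -- find L with lineY comparison
    obtain ⟨L, hL1, hL2, hLp, hgL⟩ :
        ∃ L, (v a).1 ≤ L ∧ (w b).1 ≤ L ∧ L ≤ p.1 ∧
          lineY (w b) (w (b + 1)) L ≤ lineY (v a) (v (a + 1)) L := by
      by_cases hc : (w b).1 ≤ (v a).1
      · refine ⟨(v a).1, le_refl _, hc, hpx.1, ?_⟩
        have ha0 : a ≠ 0 := by
          intro h
          apply hab0
          refine ⟨h, ?_⟩
          by_contra hb0
          have := wmono b (le_of_lt hb) 0 (Nat.pos_of_ne_zero hb0)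
          rw [← h0] at this
          rw [h] at hc
          linarith
        have hsub : a - 1 + 1 = a := by omega
        have hqL : ((v a).1, lineY (w b) (w (b + 1)) (v a).1) ∈ segment ℝ (w b) (w (b + 1)) :=
          seg_mem_of_x hCD hc (by rw [hx] at hpx; linarith [hpx.2, hqx.2])
        have := IH (a - 1 + b) (by omega) (a - 1) b rfl (by omega) hb
          (v a) (by rw [hsub] at *; exact right_mem_segment ℝ _ _) _ hqL rfl
        rw [lineY_left]
        exact this
      · push_neg at hc
        refine ⟨(w b).1, le_of_lt hc, le_refl _, by rw [hx]; exact hqx.1, ?_⟩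
        have hb0 : b ≠ 0 := by
          intro h
          rw [h, ← h0] at hc
          linarith
        have hsub : b - 1 + 1 = b := by omega
        have hpL : ((w b).1, lineY (v a) (v (a + 1)) (w b).1) ∈ segment ℝ (v a) (v (a + 1)) :=
          seg_mem_of_x hAB (le_of_lt hc) (by rw [hx] at hpx; linarith [hqx.1, hpx.2])
        have := IH (a + (b - 1)) (by omega) a (b - 1) rfl ha (by omega)
          _ hpL (w b) (by rw [hsub] at *; exact right_mem_segment ℝ _ _) rfl
        rw [lineY_left]
        exact this
    -- L < p.1
    have hLlt : L < p.1 := by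
      rcases lt_or_eq_of_le hLp with h | h
      · exact h
      · exfalso
        rw [hp2, ← h] at hlt
        rw [hq2, ← hx, ← h] at hlt
        linarith
    -- set up affine crossing
    set g1 : ℝ → ℝ := lineY (v a) (v (a + 1)) with hg1
    set g2 : ℝ → ℝ := lineY (w b) (w (b + 1)) with hg2
    have hβ : g1 p.1 - g2 p.1 < 0 := by
      have : g2 p.1 = q.2 := by rw [hq2, hx]
      rw [this, ← hp2]; linarith
    set α : ℝ := g1 L - g2 L with hα
    set β : ℝ := g1 p.1 - g2 p.1 with hβdef
    have hα0 : 0 ≤ α := by simp [hα]; linarith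
    have hαβ : 0 < α - β := by simp [hα, hβdef]; linarith [hβ]
    set θ : ℝ := α / (α - β) with hθ
    have hθ0 : 0 ≤ θ := div_nonneg hα0 (le_of_lt hαβ)
    have hθ1 : θ < 1 := (div_lt_one hαβ).2 (by linarith [hβ])
    set xs : ℝ := L + θ * (p.1 - L) with hxs
    have hxsL : L ≤ xs := by nlinarith
    have hxsp : xs < p.1 := by nlinarith
    -- linearity of g1 - g2
    have hlin : ∀ x : ℝ, g1 x - g2 x = α + (x - L) *
        (((v (a+1)).2 - (v a).2) / ((v (a+1)).1 - (v a).1) -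
         ((w (b+1)).2 - (w b).2) / ((w (b+1)).1 - (w b).1)) := by
      intro x
      simp only [hg1, hg2, hα, lineY]
      ring
    have hzero : g1 xs = g2 xs := by
      have hane : α - β ≠ 0 := ne_of_gt hαβ
      have e1 := hlin p.1
      have e2 := hlin xs
      have hxsL' : xs - L = θ * (p.1 - L) := by rw [hxs]; ring
      rw [hxsL', mul_assoc] at e2
      have hδ : (p.1 - L) *
          (((v (a+1)).2 - (v a).2) / ((v (a+1)).1 - (v a).1) -
           ((w (b+1)).2 - (w b).2) / ((w (b+1)).1 - (w b).1)) = β - α := by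
        rw [hβdef]; linarith [e1]
      rw [hδ] at e2
      have hkey : α + θ * (β - α) = 0 := by rw [hθ]; field_simp; ring
      linarith [e2, hkey]
    -- crossing point
    set ps : ℝ × ℝ := (xs, g1 xs) with hps
    have hps1 : ps ∈ segment ℝ (v a) (v (a + 1)) :=
      seg_mem_of_x hAB (le_trans hL1 hxsL) (le_trans (le_of_lt hxsp) hpx.2)
    have hps2 : ps ∈ segment ℝ (w b) (w (b + 1)) := by
      rw [hps, hzero]
      exact seg_mem_of_x hCD (le_trans hL2 hxsL)
        (by rw [hx] at hxsp; linarith [hqx.2])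
    rcases hint a ha b hb ps hps1 hps2 with ⟨ha0, hb0⟩ | ⟨hk1, hk2, hVD⟩
    · exact hab0 ⟨ha0, hb0⟩
    · -- both legs end at the same point: they coincide to the right of ps
      have hpsB : ps.1 < (v (a + 1)).1 := lt_of_lt_of_le hxsp hpx.2
      set z : ℝ × ℝ := (p.1, lineY ps (v (a + 1)) p.1) with hz
      have hzmem : z ∈ segment ℝ ps (v (a + 1)) :=
        seg_mem_of_x hpsB (le_of_lt hxsp) hpx.2
      have hz1 : z ∈ segment ℝ (v a) (v (a + 1)) :=
        (convex_segment (v a) (v (a + 1))).segment_subset hps1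
          (right_mem_segment ℝ _ _) hzmem
      have hz2 : z ∈ segment ℝ (w b) (w (b + 1)) := by
        have hsub : segment ℝ ps (w (b + 1)) ⊆ segment ℝ (w b) (w (b + 1)) :=
          (convex_segment (w b) (w (b + 1))).segment_subset hps2
            (right_mem_segment ℝ _ _)
        apply hsub
        rw [← hVD]
        exact hzmem
      have e1 : z.2 = g1 z.1 := seg_snd_eq hAB hz1
      have e2 : z.2 = g2 z.1 := seg_snd_eq hCD hz2
      have : p.2 = q.2 := by
        rw [hp2, hq2, ← hx]
        exact e1.symm.trans e2
      linarith
end Stmt6Aux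


namespace Stmt6Aux

variable {I : TSPNInstance}

lemma prv_nxt (T : Tour I) (j : Fin T.n) : T.prv (T.nxt j) = j := by
  apply Fin.ext
  simp only [Tour.prv, Tour.nxt]
  rw [Nat.mod_add_mod]
  have h : (j : ℕ) + 1 + (T.n - 1) = (j : ℕ) + T.n := by have := T.three_le; omega
  rw [h, Nat.add_mod_right, Nat.mod_eq_of_lt j.isLt]

lemma nxt_prv (T : Tour I) (j : Fin T.n) : T.nxt (T.prv j) = j := by
  apply Fin.ext
  simp only [Tour.prv, Tour.nxt]
  rw [Nat.mod_add_mod]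
  have h : (j : ℕ) + (T.n - 1) + 1 = (j : ℕ) + T.n := by have := T.three_le; omega
  rw [h, Nat.add_mod_right, Nat.mod_eq_of_lt j.isLt]

lemma mono_nxt {T : Tour I} (hT : T.IsOPT) {i : Fin T.n} (hrefl : T.IsRightReflection i)
    (k : ℕ) (hP : ∀ m, 0 < m → m < k → ¬ T.IsReflection ((T.nxt)^[m] i)) :
    ∀ m, m < k → (T.pt ((T.nxt)^[m] i)).1 < (T.pt ((T.nxt)^[m + 1] i)).1 := by
  intro m
  induction m with
  | zero =>
    intro _
    obtain ⟨s, hs, hmem, h1, h2⟩ := hrefl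
    simp only [Function.iterate_zero_apply, Function.iterate_one]
    rw [hmem.1]
    exact h2
  | succ m ih =>
    intro h
    have hnA : (T.nxt)^[m + 1] i = T.nxt ((T.nxt)^[m] i) := Function.iterate_succ_apply' _ _ _
    obtain ⟨s, hs, hmem⟩ := T.pt_on_seg ((T.nxt)^[m + 1] i)
    have hxc : (T.pt ((T.nxt)^[m + 1] i)).1 = s.1 := hmem.1
    have hprv : T.prv ((T.nxt)^[m + 1] i) = (T.nxt)^[m] i := by
      rw [hnA, prv_nxt]
    have h1 : (T.pt (T.prv ((T.nxt)^[m + 1] i))).1 < s.1 := by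
      rw [hprv, ← hxc]
      exact ih (by omega)
    have hnr := hP (m + 1) (by omega) h
    have h2 : s.1 ≤ (T.pt (T.nxt ((T.nxt)^[m + 1] i))).1 := by
      by_contra hlt
      push_neg at hlt
      exact hnr (Or.inl ⟨s, hs, hmem, h1, hlt⟩)
    have h3 : (T.pt ((T.nxt)^[m + 1] i)).1 ≠ (T.pt (T.nxt ((T.nxt)^[m + 1] i))).1 :=
      hT.2.2.2.1 _
    have h4 : s.1 < (T.pt (T.nxt ((T.nxt)^[m + 1] i))).1 :=
      lt_of_le_of_ne h2 (hxc ▸ h3)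
    have hnA2 : (T.nxt)^[m + 1 + 1] i = T.nxt ((T.nxt)^[m + 1] i) :=
      Function.iterate_succ_apply' _ _ _
    rw [hnA2, hxc]
    exact h4

lemma mono_prv {T : Tour I} (hT : T.IsOPT) {i : Fin T.n} (hrefl : T.IsRightReflection i)
    (k : ℕ) (hP : ∀ m, 0 < m → m < k → ¬ T.IsReflection ((T.prv)^[m] i)) :
    ∀ m, m < k → (T.pt ((T.prv)^[m] i)).1 < (T.pt ((T.prv)^[m + 1] i)).1 := by
  intro m
  induction m with
  | zero =>
    intro _
    obtain ⟨s, hs, hmem, h1, h2⟩ := hrefl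
    simp only [Function.iterate_zero_apply, Function.iterate_one]
    rw [hmem.1]
    exact h1
  | succ m ih =>
    intro h
    have hnA : (T.prv)^[m + 1] i = T.prv ((T.prv)^[m] i) := Function.iterate_succ_apply' _ _ _
    obtain ⟨s, hs, hmem⟩ := T.pt_on_seg ((T.prv)^[m + 1] i)
    have hxc : (T.pt ((T.prv)^[m + 1] i)).1 = s.1 := hmem.1
    have hnxt : T.nxt ((T.prv)^[m + 1] i) = (T.prv)^[m] i := by
      rw [hnA, nxt_prv]
    have h1 : (T.pt (T.nxt ((T.prv)^[m + 1] i))).1 < s.1 := by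
      rw [hnxt, ← hxc]
      exact ih (by omega)
    have hnr := hP (m + 1) (by omega) h
    have h2 : s.1 ≤ (T.pt (T.prv ((T.prv)^[m + 1] i))).1 := by
      by_contra hlt
      push_neg at hlt
      exact hnr (Or.inl ⟨s, hs, hmem, hlt, h1⟩)
    have h3 : (T.pt (T.prv ((T.prv)^[m + 1] i))).1 ≠ (T.pt ((T.prv)^[m + 1] i)).1 := by
      have := hT.2.2.2.1 (T.prv ((T.prv)^[m + 1] i))
      rwa [nxt_prv] at this
    have h4 : s.1 < (T.pt (T.prv ((T.prv)^[m + 1] i))).1 :=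
      lt_of_le_of_ne h2 (fun hh => h3 (by rw [← hh, hxc]))
    have hnA2 : (T.prv)^[m + 1 + 1] i = T.prv ((T.prv)^[m + 1] i) :=
      Function.iterate_succ_apply' _ _ _
    rw [hnA2, hxc]
    exact h4

lemma hint_aux {T : Tour I} (hT : T.IsOPT) {i : Fin T.n} (k₁ k₂ : ℕ)
    (hP₁ : ∀ m, 0 < m → m < k₁ → ¬ T.IsReflection ((T.nxt)^[m] i))
    (hP₂ : ∀ m, 0 < m → m < k₂ → ¬ T.IsReflection ((T.prv)^[m] i))
    (hv : ∀ m, m < k₁ → (T.pt ((T.nxt)^[m] i)).1 < (T.pt ((T.nxt)^[m + 1] i)).1)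
    (hw : ∀ m, m < k₂ → (T.pt ((T.prv)^[m] i)).1 < (T.pt ((T.prv)^[m + 1] i)).1)
    {a b : ℕ} (ha : a < k₁) (hb : b < k₂) {z : ℝ × ℝ}
    (hz1 : z ∈ segment ℝ (T.pt ((T.nxt)^[a] i)) (T.pt ((T.nxt)^[a + 1] i)))
    (hz2 : z ∈ segment ℝ (T.pt ((T.prv)^[b] i)) (T.pt ((T.prv)^[b + 1] i))) :
    (a = 0 ∧ b = 0) ∨
      (a + 1 = k₁ ∧ b + 1 = k₂ ∧ T.pt ((T.nxt)^[a + 1] i) = T.pt ((T.prv)^[b + 1] i)) := by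
  have hnA : (T.nxt)^[a + 1] i = T.nxt ((T.nxt)^[a] i) := Function.iterate_succ_apply' _ _ _
  have hnB : T.nxt ((T.prv)^[b + 1] i) = (T.prv)^[b] i := by
    rw [Function.iterate_succ_apply', nxt_prv]
  have hlegA : z ∈ T.leg ((T.nxt)^[a] i) := by
    rw [Tour.leg, ← hnA]
    exact hz1
  have hlegB : z ∈ T.leg ((T.prv)^[b + 1] i) := by
    rw [Tour.leg, hnB, segment_symm]
    exact hz2
  by_cases hBA : (T.prv)^[b + 1] i = (T.nxt)^[a] i
  · exfalso
    have h1 := hv a ha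
    have h2 := hw b hb
    have e : (T.prv)^[b] i = (T.nxt)^[a + 1] i := by
      rw [hnA, ← hBA, hnB]
    rw [e, hBA] at h2
    linarith
  by_cases hBnA : (T.prv)^[b + 1] i = T.nxt ((T.nxt)^[a] i)
  · -- shared right vertex
    have hreflB : T.IsReflection ((T.prv)^[b + 1] i) := by
      obtain ⟨s, hs, hmem⟩ := T.pt_on_seg ((T.prv)^[b + 1] i)
      left
      refine ⟨s, hs, hmem, ?_, ?_⟩
      · have hpB : T.prv ((T.prv)^[b + 1] i) = (T.nxt)^[a] i := by rw [hBnA, prv_nxt]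
        rw [hpB, ← hmem.1, hBnA, ← hnA]
        exact hv a ha
      · rw [hnB, ← hmem.1]
        exact hw b hb
    by_cases h1 : a + 1 < k₁
    · have := hP₁ (a + 1) (by omega) h1
      rw [hnA, ← hBnA] at this
      exact absurd hreflB this
    by_cases h2 : b + 1 < k₂
    · exact absurd hreflB (hP₂ (b + 1) (by omega) h2)
    right
    refine ⟨by omega, by omega, ?_⟩
    rw [hnA, ← hBnA]
  by_cases hAnB : (T.nxt)^[a] i = T.nxt ((T.prv)^[b + 1] i)
  · -- shared left vertex
    have hreflA : T.IsReflection ((T.nxt)^[a] i) := by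
      obtain ⟨s, hs, hmem⟩ := T.pt_on_seg ((T.nxt)^[a] i)
      right
      refine ⟨s, hs, hmem, ?_, ?_⟩
      · have hpA : T.prv ((T.nxt)^[a] i) = (T.prv)^[b + 1] i := by rw [hAnB, prv_nxt]
        rw [hpA, ← hmem.1, hAnB, hnB]
        exact hw b hb
      · rw [← hmem.1, ← hnA]
        exact hv a ha
    by_cases h1 : 0 < a
    · exact absurd hreflA (hP₁ a h1 ha)
    by_cases h2 : 0 < b
    · have := hP₂ b h2 hb
      rw [← hnB, ← hAnB] at this
      exact absurd hreflA this
    exact Or.inl ⟨by omega, by omega⟩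
  · exfalso
    have hempty := hT.2.2.1 ((T.nxt)^[a] i) ((T.prv)^[b + 1] i) hBA hBnA hAnB
    exact Set.eq_empty_iff_forall_notMem.mp hempty z ⟨hlegA, hlegB⟩

lemma dirLeg_true (T : Tour I) (i : Fin T.n) (m : ℕ) :
    T.dirLeg true i m = segment ℝ (T.pt ((T.nxt)^[m] i)) (T.pt ((T.nxt)^[m + 1] i)) := by
  show T.leg ((T.nxt)^[m] i) = _
  rw [Tour.leg, ← Function.iterate_succ_apply' T.nxt m i]

lemma dirLeg_false (T : Tour I) (i : Fin T.n) (m : ℕ) :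
    T.dirLeg false i m = segment ℝ (T.pt ((T.prv)^[m] i)) (T.pt ((T.prv)^[m + 1] i)) := by
  show T.leg ((T.prv)^[m + 1] i) = _
  have h : T.nxt ((T.prv)^[m + 1] i) = (T.prv)^[m] i := by
    rw [Function.iterate_succ_apply', nxt_prv]
  rw [Tour.leg, h, segment_symm]

end Stmt6Aux

/-- Let `r = pt i` be a right reflection point whose incident leg `ℓ`
(the first leg of the subpath `P₁`) is above the other incident leg `ℓ'` (the first
leg of `P₂`), where `P₁` and `P₂` are the two subpaths of `OPT` starting at `r` in the
two directions, containing no reflection point other than possibly `r`. If a vertical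
line `x = x₁ > x(r)` meets both, then `P₁` is above `P₂` on `[x(r), x₁]`. -/
theorem statement6 (I : TSPNInstance) (T : Tour I) (hT : T.IsOPT) (i : Fin T.n)
    (hrefl : T.IsRightReflection i)
    (d₁ d₂ : Bool) (hd : d₁ ≠ d₂) (k₁ k₂ : ℕ) (hk₁ : 0 < k₁) (hk₂ : 0 < k₂)
    (hAbove : LegAbove (T.pt i) (T.dirLeg d₁ i 0) (T.dirLeg d₂ i 0))
    (hP₁ : ∀ m, 0 < m → m < k₁ → ¬ T.IsReflection (T.dirIdx d₁ i m))
    (hP₂ : ∀ m, 0 < m → m < k₂ → ¬ T.IsReflection (T.dirIdx d₂ i m))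
    (x₁ : ℝ) (hx₁ : (T.pt i).1 < x₁)
    (hm₁ : ∃ p ∈ T.dirPts d₁ i k₁, p.1 = x₁)
    (hm₂ : ∃ p ∈ T.dirPts d₂ i k₂, p.1 = x₁) :
    AboveOn (T.dirPts d₁ i k₁) (T.dirPts d₂ i k₂) (Set.Icc (T.pt i).1 x₁) := by
  classical
  have main : ∀ p₁ ∈ T.dirPts d₁ i k₁, ∀ p₂ ∈ T.dirPts d₂ i k₂,
      p₁.1 = p₂.1 → p₂.2 ≤ p₁.2 := by
    cases d₁ with
    | true =>
      have hd2 : d₂ = false := by cases d₂ <;> simp_all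
      subst hd2
      simp only [Tour.dirIdx, if_true] at hP₁ hP₂
      have hv := Stmt6Aux.mono_nxt hT hrefl k₁ hP₁
      have hw := Stmt6Aux.mono_prv hT hrefl k₂ (by
        intro m h1 h2
        have := hP₂ m h1 h2
        simpa using this)
      rw [Stmt6Aux.dirLeg_true, Stmt6Aux.dirLeg_false] at hAbove
      have habove : ∀ p ∈ segment ℝ (T.pt ((T.nxt)^[0] i)) (T.pt ((T.nxt)^[0 + 1] i)),
          ∀ q ∈ segment ℝ (T.pt ((T.prv)^[0] i)) (T.pt ((T.prv)^[0 + 1] i)),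
          p ≠ T.pt ((T.nxt)^[0] i) → q ≠ T.pt ((T.nxt)^[0] i) → q.2 < p.2 :=
        fun p hp q hq hpne hqne => hAbove p hp q hq hpne hqne
      have hint : ∀ a, a < k₁ → ∀ b, b < k₂ → ∀ z,
          z ∈ segment ℝ (T.pt ((T.nxt)^[a] i)) (T.pt ((T.nxt)^[a + 1] i)) →
          z ∈ segment ℝ (T.pt ((T.prv)^[b] i)) (T.pt ((T.prv)^[b + 1] i)) →
          (a = 0 ∧ b = 0) ∨ (a + 1 = k₁ ∧ b + 1 = k₂ ∧
            T.pt ((T.nxt)^[a + 1] i) = T.pt ((T.prv)^[b + 1] i)) := by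
        intro a ha b hb z hz1 hz2
        exact Stmt6Aux.hint_aux hT k₁ k₂ hP₁ (by
          intro m h1 h2
          have := hP₂ m h1 h2
          simpa using this) hv hw ha hb hz1 hz2
      have key := Stmt6Aux.above_key (fun m => T.pt ((T.nxt)^[m] i))
        (fun m => T.pt ((T.prv)^[m] i)) k₁ k₂ rfl hv hw habove hint
      intro p₁ hp₁ p₂ hp₂ hx
      simp only [Tour.dirPts, Set.mem_iUnion, Set.mem_Iio, exists_prop] at hp₁ hp₂
      obtain ⟨a, ha, hp₁⟩ := hp₁
      obtain ⟨b, hb, hp₂⟩ := hp₂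
      rw [Stmt6Aux.dirLeg_true] at hp₁
      rw [Stmt6Aux.dirLeg_false] at hp₂
      exact key a ha b hb p₁ hp₁ p₂ hp₂ hx
    | false =>
      have hd2 : d₂ = true := by cases d₂ <;> simp_all
      subst hd2
      simp only [Tour.dirIdx, if_true] at hP₁ hP₂
      have hv := Stmt6Aux.mono_prv hT hrefl k₁ (by
        intro m h1 h2
        have := hP₁ m h1 h2
        simpa using this)
      have hw := Stmt6Aux.mono_nxt hT hrefl k₂ hP₂
      rw [Stmt6Aux.dirLeg_true, Stmt6Aux.dirLeg_false] at hAbove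
      have habove : ∀ p ∈ segment ℝ (T.pt ((T.prv)^[0] i)) (T.pt ((T.prv)^[0 + 1] i)),
          ∀ q ∈ segment ℝ (T.pt ((T.nxt)^[0] i)) (T.pt ((T.nxt)^[0 + 1] i)),
          p ≠ T.pt ((T.prv)^[0] i) → q ≠ T.pt ((T.prv)^[0] i) → q.2 < p.2 :=
        fun p hp q hq hpne hqne => hAbove p hp q hq hpne hqne
      have hint : ∀ a, a < k₁ → ∀ b, b < k₂ → ∀ z,
          z ∈ segment ℝ (T.pt ((T.prv)^[a] i)) (T.pt ((T.prv)^[a + 1] i)) →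
          z ∈ segment ℝ (T.pt ((T.nxt)^[b] i)) (T.pt ((T.nxt)^[b + 1] i)) →
          (a = 0 ∧ b = 0) ∨ (a + 1 = k₁ ∧ b + 1 = k₂ ∧
            T.pt ((T.prv)^[a + 1] i) = T.pt ((T.nxt)^[b + 1] i)) := by
        intro a ha b hb z hz1 hz2
        have := Stmt6Aux.hint_aux hT k₂ k₁ hP₂ (by
          intro m h1 h2
          have := hP₁ m h1 h2
          simpa using this) hw hv hb ha hz2 hz1
        rcases this with ⟨h1, h2⟩ | ⟨h1, h2, h3⟩
        · exact Or.inl ⟨h2, h1⟩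
        · exact Or.inr ⟨h2, h1, h3.symm⟩
      have key := Stmt6Aux.above_key (fun m => T.pt ((T.prv)^[m] i))
        (fun m => T.pt ((T.nxt)^[m] i)) k₁ k₂ rfl hv hw habove hint
      intro p₁ hp₁ p₂ hp₂ hx
      simp only [Tour.dirPts, Set.mem_iUnion, Set.mem_Iio, exists_prop] at hp₁ hp₂
      obtain ⟨a, ha, hp₁⟩ := hp₁
      obtain ⟨b, hb, hp₂⟩ := hp₂
      rw [Stmt6Aux.dirLeg_false] at hp₁
      rw [Stmt6Aux.dirLeg_true] at hp₂
      exact key a ha b hb p₁ hp₁ p₂ hp₂ hx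
  intro x₀ hx₀ hex₁ hex₂ p hp hpx htop
  rcases hp with hp | hp
  · exact hp
  · obtain ⟨p₁, hp₁, hp₁x⟩ := hex₁
    have h1 : p.2 ≤ p₁.2 := main p₁ hp₁ p hp (by rw [hp₁x, hpx])
    have h2 : p₁.2 ≤ p.2 := htop p₁ (Or.inl hp₁) hp₁x
    have : p = p₁ := Prod.ext (by rw [hpx, hp₁x]) (le_antisymm h1 h2)
    rw [this]
    exact hp₁
end
end

section
/- Let p and p' be reflection points of OPT that are consecutive, meaning that traversing OPT from p to p' according to its orientation, no interior tour vertex is a reflection point. If x(p) < x(p'), then p is a right reflection point and p' is a left reflection point; if x(p) > x(p'), then p is a left reflection point and p' is a right reflection point. In particular, two consecutive reflection points cannot both be left reflections or both be right reflections. -/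
noncomputable section

theorem Tour.prv_nxt' {I : TSPNInstance} (T : Tour I) (j : Fin T.n) :
    T.prv (T.nxt j) = j := by
  have h3 := T.three_le
  apply Fin.ext
  show ((j.1 + 1) % T.n + (T.n - 1)) % T.n = j.1
  have hj := j.2
  rw [Nat.mod_add_mod]
  have h : j.1 + 1 + (T.n - 1) = j.1 + T.n := by omega
  rw [h, Nat.add_mod_right, Nat.mod_eq_of_lt hj]

/-- Consecutive reflection points of `OPT` alternate: if `x(p) < x(p')`
then `p` is a right and `p'` a left reflection; if `x(p) > x(p')` then `p` is a left
and `p'` a right reflection; in particular they cannot both be left reflections or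
both be right reflections. -/
theorem statement7 (I : TSPNInstance) (T : Tour I) (hT : T.IsOPT)
    (i : Fin T.n) (k : ℕ) (hk : 0 < k) (hkn : k < T.n)
    (hi : T.IsReflection i) (hj : T.IsReflection ((T.nxt)^[k] i))
    (hcons : ∀ m, 0 < m → m < k → ¬ T.IsReflection ((T.nxt)^[m] i)) :
    ((T.pt i).1 < (T.pt ((T.nxt)^[k] i)).1 →
        T.IsRightReflection i ∧ T.IsLeftReflection ((T.nxt)^[k] i)) ∧
    ((T.pt ((T.nxt)^[k] i)).1 < (T.pt i).1 →
        T.IsLeftReflection i ∧ T.IsRightReflection ((T.nxt)^[k] i)) ∧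
    ¬ (T.IsLeftReflection i ∧ T.IsLeftReflection ((T.nxt)^[k] i)) ∧
    ¬ (T.IsRightReflection i ∧ T.IsRightReflection ((T.nxt)^[k] i)) := by
  obtain ⟨k', rfl⟩ : ∃ k', k = k' + 1 := ⟨k - 1, by omega⟩
  have hnv := hT.2.2.2.1
  set x : ℕ → ℝ := fun m => (T.pt ((T.nxt)^[m] i)).1 with hxdef
  have hxsucc : ∀ m, (T.pt (T.nxt ((T.nxt)^[m] i))).1 = x (m + 1) := by
    intro m
    rw [hxdef]
    rw [← Function.iterate_succ_apply' T.nxt m i]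
  have hxprv : ∀ m, (T.pt (T.prv ((T.nxt)^[m + 1] i))).1 = x m := by
    intro m
    rw [Function.iterate_succ_apply', T.prv_nxt']
  have hnv' : ∀ m : ℕ, x m ≠ x (m + 1) := by
    intro m
    have h := hnv ((T.nxt)^[m] i)
    rw [hxsucc m] at h
    exact h
  have charL : ∀ j : Fin T.n, T.IsLeftReflection j ↔
      ((T.pt (T.prv j)).1 < (T.pt j).1 ∧ (T.pt (T.nxt j)).1 < (T.pt j).1) := by
    intro j
    constructor
    · rintro ⟨s, hs, hps, h1, h2⟩
      rw [hps.1]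
      exact ⟨h1, h2⟩
    · rintro ⟨h1, h2⟩
      obtain ⟨s, hs, hps⟩ := T.pt_on_seg j
      exact ⟨s, hs, hps, by rw [← hps.1]; exact h1, by rw [← hps.1]; exact h2⟩
  have charR : ∀ j : Fin T.n, T.IsRightReflection j ↔
      ((T.pt j).1 < (T.pt (T.prv j)).1 ∧ (T.pt j).1 < (T.pt (T.nxt j)).1) := by
    intro j
    constructor
    · rintro ⟨s, hs, hps, h1, h2⟩
      rw [hps.1]
      exact ⟨h1, h2⟩
    · rintro ⟨h1, h2⟩
      obtain ⟨s, hs, hps⟩ := T.pt_on_seg j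
      exact ⟨s, hs, hps, by rw [← hps.1]; exact h1, by rw [← hps.1]; exact h2⟩
  have hstep : ∀ m, m + 1 < k' + 1 → (x m < x (m + 1) ↔ x (m + 1) < x (m + 2)) := by
    intro m hm
    have hnr := hcons (m + 1) (by omega) hm
    have e1 : (T.pt (T.prv ((T.nxt)^[m + 1] i))).1 = x m := hxprv m
    have e2 : (T.pt (T.nxt ((T.nxt)^[m + 1] i))).1 = x (m + 2) := hxsucc (m + 1)
    have e0 : (T.pt ((T.nxt)^[m + 1] i)).1 = x (m + 1) := rfl
    have hA : ¬ (x m < x (m + 1) ∧ x (m + 2) < x (m + 1)) := by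
      rintro ⟨h1, h2⟩
      exact hnr (Or.inl ((charL _).2 ⟨by rw [e1, e0]; exact h1, by rw [e2, e0]; exact h2⟩))
    have hB : ¬ (x (m + 1) < x m ∧ x (m + 1) < x (m + 2)) := by
      rintro ⟨h1, h2⟩
      exact hnr (Or.inr ((charR _).2 ⟨by rw [e1, e0]; exact h1, by rw [e2, e0]; exact h2⟩))
    rcases lt_or_gt_of_ne (hnv' m) with h1 | h1 <;>
      rcases lt_or_gt_of_ne (hnv' (m + 1)) with h2 | h2
    · exact iff_of_true h1 h2
    · exact absurd ⟨h1, h2⟩ hA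
    · exact absurd ⟨h1, h2⟩ hB
    · exact iff_of_false (not_lt.2 h1.le) (not_lt.2 h2.le)
  have hdir : ∀ m, m < k' + 1 → (x m < x (m + 1) ↔ x 0 < x 1) := by
    intro m
    induction m with
    | zero => intro _; exact Iff.rfl
    | succ m ih =>
      intro hm
      rw [← hstep m hm]
      exact ih (by omega)
  have hup : x 0 < x 1 → ∀ m, 0 < m → m ≤ k' + 1 → x 0 < x m := by
    intro h01 m
    induction m with
    | zero => omega
    | succ m ih =>
      intro _ hm
      have hs : x m < x (m + 1) := (hdir m (by omega)).2 h01
      rcases Nat.eq_zero_or_pos m with rfl | hpos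
      · exact hs
      · exact lt_trans (ih hpos (by omega)) hs
  have hdown : x 1 < x 0 → ∀ m, 0 < m → m ≤ k' + 1 → x m < x 0 := by
    intro h10 m
    induction m with
    | zero => omega
    | succ m ih =>
      intro _ hm
      have hns : ¬ (x m < x (m + 1)) := fun h => absurd ((hdir m (by omega)).1 h) (not_lt.2 h10.le)
      have hs : x (m + 1) < x m := lt_of_le_of_ne (not_lt.1 hns) (hnv' m).symm
      rcases Nat.eq_zero_or_pos m with rfl | hpos
      · exact hs
      · exact lt_trans hs (ih hpos (by omega))
  have exi0 : (T.pt (T.nxt i)).1 = x 1 := hxsucc 0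
  have exk : (T.pt (T.prv ((T.nxt)^[k' + 1] i))).1 = x k' := hxprv k'
  have F3 : T.IsRightReflection i → x 0 < x 1 := by
    intro h
    have := ((charR i).1 h).2
    rw [exi0] at this
    exact this
  have F4 : T.IsLeftReflection i → x 1 < x 0 := by
    intro h
    have := ((charL i).1 h).2
    rw [exi0] at this
    exact this
  have F1 : x 0 < x 1 → T.IsRightReflection i := by
    intro h01
    rcases hi with h | h
    · exact absurd h01 (not_lt.2 (F4 h).le)
    · exact h
  have F2 : x 1 < x 0 → T.IsLeftReflection i := by
    intro h10
    rcases hi with h | h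
    · exact h
    · exact absurd h10 (not_lt.2 (F3 h).le)
  have G3 : T.IsLeftReflection ((T.nxt)^[k' + 1] i) → x k' < x (k' + 1) := by
    intro h
    have := ((charL _).1 h).1
    rw [exk] at this
    exact this
  have G4 : T.IsRightReflection ((T.nxt)^[k' + 1] i) → x (k' + 1) < x k' := by
    intro h
    have := ((charR _).1 h).1
    rw [exk] at this
    exact this
  have G1 : x k' < x (k' + 1) → T.IsLeftReflection ((T.nxt)^[k' + 1] i) := by
    intro hlt
    rcases hj with h | h
    · exact h
    · exact absurd hlt (not_lt.2 (G4 h).le)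
  have G2 : x (k' + 1) < x k' → T.IsRightReflection ((T.nxt)^[k' + 1] i) := by
    intro hlt
    rcases hj with h | h
    · exact absurd hlt (not_lt.2 (G3 h).le)
    · exact h
  refine ⟨?_, ?_, ?_, ?_⟩
  · intro h
    have h' : x 0 < x (k' + 1) := h
    have h01 : x 0 < x 1 := by
      by_contra hcon
      have h10 : x 1 < x 0 := lt_of_le_of_ne (not_lt.1 hcon) (hnv' 0).symm
      exact absurd h' (not_lt.2 (hdown h10 (k' + 1) (by omega) le_rfl).le)
    exact ⟨F1 h01, G1 ((hdir k' (by omega)).2 h01)⟩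
  · intro h
    have h' : x (k' + 1) < x 0 := h
    have h10 : x 1 < x 0 := by
      by_contra hcon
      have h01 : x 0 < x 1 := lt_of_le_of_ne (not_lt.1 hcon) (hnv' 0)
      exact absurd h' (not_lt.2 (hup h01 (k' + 1) (by omega) le_rfl).le)
    have hns : ¬ (x k' < x (k' + 1)) :=
      fun hq => absurd ((hdir k' (by omega)).1 hq) (not_lt.2 h10.le)
    exact ⟨F2 h10, G2 (lt_of_le_of_ne (not_lt.1 hns) (hnv' k').symm)⟩
  · rintro ⟨hLi, hLj⟩
    exact absurd ((hdir k' (by omega)).1 (G3 hLj)) (not_lt.2 (F4 hLi).le)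
  · rintro ⟨hRi, hRj⟩
    exact absurd ((hdir k' (by omega)).2 (F3 hRi)) (not_lt.2 (G4 hRj).le)
end
end
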